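/- arXiv:1811.07667 — 7 statements merged into one kernel-verified Lean document; each statement's English description precedes it below -/
import Mathlib

section
/- Let A be strictly positive selfadjoint, f : σ(A) → [0,∞) continuous, and 𝒜 the operator 𝒜(u,v) = (v, −Au − f(A)v) with domain D(𝒜) = {(u,v) ∈ H^1 × H : v ∈ H^1, Au + f(A)v ∈ H}. Then 𝒜 is bijective (equivalently, 0 is in the resolvent set of 𝒜) if and only if sup_{s ∈ σ(A)} f(s)/s < ∞. -/
open MeasureTheory Filter Complex

noncomputable section

variable {Ω : Type*} [MeasurableSpace Ω]

/-- `∫ a |u|²`: the squared `H¹ = D(A^{1/2})`-seminorm in the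
multiplication-operator model of the spectral theorem, where `A` acts as
multiplication by `a`. -/
def aInt (μ : Measure Ω) (a : Ω → ℝ) (u : Ω → ℂ) : ENNReal :=
  ∫⁻ ω, ENNReal.ofReal (a ω * ‖u ω‖ ^ 2) ∂μ

/-- Membership in `H¹ = D(A^{1/2})`. -/
def memH1 (μ : Measure Ω) (a : Ω → ℝ) (u : Ω → ℂ) : Prop :=
  MemLp u 2 μ ∧ aInt μ a u < ⊤

/-- Membership in the domain of the generator `𝒜(u,v) = (v, -Au - f(A)v)`:
`u, v ∈ H¹` and `Au + f(A)v ∈ H`. -/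
def memDom (μ : Measure Ω) (a : Ω → ℝ) (f : ℝ → ℝ) (u v : Ω → ℂ) : Prop :=
  memH1 μ a u ∧ memH1 μ a v ∧
    MemLp (fun ω => (a ω : ℂ) * u ω + (f (a ω) : ℂ) * v ω) 2 μ

/-- Squared norm in the phase space `ℋ = H¹ × H`. -/
def hsq (μ : Measure Ω) (a : Ω → ℝ) (u v : Ω → ℂ) : ENNReal :=
  aInt μ a u + ∫⁻ ω, ENNReal.ofReal (‖v ω‖ ^ 2) ∂μ

/-- `ξ` belongs to the resolvent set of `𝒜`: the equation `ξ z - 𝒜 z = ẑ` has,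
for every `ẑ ∈ ℋ`, a unique solution `z ∈ D(𝒜)`, depending boundedly on `ẑ`. -/
def resSet (μ : Measure Ω) (a : Ω → ℝ) (f : ℝ → ℝ) (ξ : ℂ) : Prop :=
  ∃ C : ℝ, ∀ uh vh : Ω → ℂ, memH1 μ a uh → MemLp vh 2 μ →
    ∃ u v : Ω → ℂ, memDom μ a f u v ∧
      (fun ω => ξ * u ω - v ω) =ᵐ[μ] uh ∧
      (fun ω => ξ * v ω + ((a ω : ℂ) * u ω + (f (a ω) : ℂ) * v ω)) =ᵐ[μ] vh ∧
      hsq μ a u v ≤ ENNReal.ofReal C * hsq μ a uh vh ∧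
      ∀ u' v' : Ω → ℂ, memDom μ a f u' v' →
        (fun ω => ξ * u' ω - v' ω) =ᵐ[μ] uh →
        (fun ω => ξ * v' ω + ((a ω : ℂ) * u' ω + (f (a ω) : ℂ) * v' ω)) =ᵐ[μ] vh →
        u' =ᵐ[μ] u ∧ v' =ᵐ[μ] v

/-- The set `Λ` of positive limits of `f(sₙ)/sₙ` along sequences `sₙ → ∞` in `σ`. -/
def limSet (σS : Set ℝ) (f : ℝ → ℝ) : Set ℝ :=
  {ℓ : ℝ | 0 < ℓ ∧ ∃ s : ℕ → ℝ, (∀ n, s n ∈ σS) ∧ Tendsto s atTop atTop ∧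
    Tendsto (fun n => f (s n) / s n) atTop (nhds ℓ)}

/-! In the multiplication model, `𝒜(u, v) = (û, v̂)` forces `v = û` and
`u = -(v̂ + f(a) û) / a`; so `𝒜` is always injective, and it is onto exactly when this `u`
lies in `H¹` for all data. If `f(s)/s ≤ C` on `σ`, then `a |u|² ≤ 2 |v̂|² / s₀ + 2 C² a |û|²`.
Otherwise compactness pushes the large values of `f(s)/s` to infinity, which gives spectral
points `sₙ`, at mutual distance more than one, with `f(sₙ)/sₙ > 2ⁿ`. Data `û` supported on
disjoint sets where `a ≈ sₙ`, suitably normalised, satisfy `∫ a |û|² < ∞` but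
`∫ a |u|² = ∫ f(a)² |û|² / a = ∞`, so `(û, 0)` has no preimage. -/

open scoped ENNReal

lemma memLp_two_iff_lintegral_lt_top {E : Type*} [NormedAddCommGroup E] {μ : Measure Ω}
    {u : Ω → E} (hu : AEStronglyMeasurable u μ) :
    MemLp u 2 μ ↔ ∫⁻ ω, ENNReal.ofReal (‖u ω‖ ^ 2) ∂μ < ⊤ := by
  have hpow : ∀ ω, ENNReal.ofReal (‖u ω‖ ^ 2) = ‖u ω‖ₑ ^ (2 : ℝ≥0∞).toReal := fun ω => by
    rw [ENNReal.ofReal_pow (norm_nonneg _), ofReal_norm]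
    norm_num
  rw [MemLp, and_iff_right hu,
    eLpNorm_lt_top_iff_lintegral_rpow_enorm_lt_top two_ne_zero ENNReal.ofNat_ne_top]
  simp_rw [hpow]

lemma ContinuousOn.aemeasurable_comp_of_ae_mem {α β : Type*} [MeasurableSpace α]
    [TopologicalSpace α] [OpensMeasurableSpace α] [TopologicalSpace β] [MeasurableSpace β]
    [BorelSpace β] {μ : Measure Ω} {a : Ω → α} {f : α → β} {s : Set α}
    (hf : ContinuousOn f s) (hs : MeasurableSet s) (ha : Measurable a)
    (has : ∀ᵐ ω ∂μ, a ω ∈ s) : AEMeasurable (fun ω => f (a ω)) μ := by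
  have hmap : (μ.map a).restrict s = μ.map a :=
    Measure.restrict_eq_self_of_ae_mem ((ae_map_iff ha.aemeasurable hs).2 has)
  exact (hmap ▸ hf.aemeasurable hs).comp_measurable ha

lemma mul_norm_div_sq_le {s₀ t φ C : ℝ} (x y : ℂ) (hs₀ : 0 < s₀) (ht : s₀ ≤ t) (hφ : 0 ≤ φ)
    (hφC : φ ≤ C * t) :
    t * ‖(x + φ * y) / t‖ ^ 2 ≤ 2 * s₀⁻¹ * ‖x‖ ^ 2 + 2 * C ^ 2 * (t * ‖y‖ ^ 2) := by
  have ht0 : 0 < t := hs₀.trans_le ht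
  have hsum : ‖x + φ * y‖ ≤ ‖x‖ + φ * ‖y‖ := by
    simpa [norm_mul, abs_of_nonneg hφ] using norm_add_le x (φ * y)
  have hsq : ‖x + φ * y‖ ^ 2 ≤ 2 * ‖x‖ ^ 2 + 2 * φ ^ 2 * ‖y‖ ^ 2 := by
    nlinarith [norm_nonneg (x + φ * y), sq_nonneg (‖x‖ - φ * ‖y‖)]
  have hx : 2 * ‖x‖ ^ 2 ≤ 2 * s₀⁻¹ * ‖x‖ ^ 2 * t := by
    have : 1 ≤ s₀⁻¹ * t := by rwa [inv_mul_eq_div, one_le_div hs₀]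
    nlinarith [sq_nonneg ‖x‖]
  have hy : 2 * φ ^ 2 * ‖y‖ ^ 2 ≤ 2 * C ^ 2 * (t * ‖y‖ ^ 2) * t := by
    have : φ ^ 2 ≤ (C * t) ^ 2 := pow_le_pow_left₀ hφ hφC 2
    nlinarith [sq_nonneg ‖y‖]
  rw [norm_div, Complex.norm_real, Real.norm_of_nonneg ht0.le, div_pow,
    mul_div_assoc', sq t, mul_div_mul_left _ _ ht0.ne', div_le_iff₀ ht0]
  linarith

lemma frequently_atTop_mem_lt_of_not_bddAbove {s : Set ℝ} {g : ℝ → ℝ} (hs : IsClosed s)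
    (hs_bdd : BddBelow s) (hg : ContinuousOn g s) (hunb : ¬BddAbove (g '' s)) (B : ℝ) :
    ∃ᶠ x in atTop, x ∈ s ∧ B < g x := by
  rw [frequently_atTop]
  intro M
  by_contra! hle
  obtain ⟨b, hb⟩ := hs_bdd
  have hK : IsCompact (s ∩ Set.Icc b M) :=
    isCompact_Icc.of_isClosed_subset (hs.inter isClosed_Icc) Set.inter_subset_right
  obtain ⟨K, hK⟩ := hK.bddAbove_image (hg.mono Set.inter_subset_left)
  refine hunb ⟨max B K, ?_⟩
  rintro _ ⟨x, hx, rfl⟩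
  rcases le_total x M with hxM | hMx
  · exact (hK ⟨x, ⟨hx, hb hx, hxM⟩, rfl⟩).trans (le_max_right _ _)
  · exact (hle x hMx hx).trans (le_max_left _ _)

lemma exists_seq_add_one_lt {p : ℕ → ℝ → Prop} (h : ∀ n, ∃ᶠ x in atTop, p n x) :
    ∃ x : ℕ → ℝ, (∀ n, p n (x n)) ∧ ∀ m n, m < n → x m + 1 < x n := by
  choose y hy using fun n M => frequently_atTop.1 (h n) M
  let x : ℕ → ℝ := fun n => Nat.rec (y 0 0) (fun k xk => y (k + 1) (xk + 2)) n
  have hstep : ∀ n, x n + 1 < x (n + 1) := fun n => by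
    have : x n + 2 ≤ x (n + 1) := (hy (n + 1) (x n + 2)).1
    linarith
  have hmono : StrictMono x := strictMono_nat_of_lt_succ fun n => by linarith [hstep n]
  refine ⟨x, fun n => ?_, fun m n hmn => ?_⟩
  · cases n with
    | zero => exact (hy 0 0).2
    | succ k => exact (hy (k + 1) _).2
  · obtain ⟨k, rfl⟩ := Nat.exists_eq_add_of_lt hmn
    linarith [hmono.monotone (Nat.le_add_right m k), hstep (m + k)]

lemma exists_weighted_lintegral_lt_top_eq_top {μ : Measure Ω} {w W : Ω → ℝ} {F : ℕ → Set Ω}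
    (hFm : ∀ n, MeasurableSet (F n)) (hFd : Pairwise (Function.onFun Disjoint F))
    (hpos : ∀ n, 0 < ∫⁻ ω in F n, ENNReal.ofReal (w ω) ∂μ)
    (hfin : ∀ n, ∫⁻ ω in F n, ENNReal.ofReal (w ω) ∂μ ≠ ⊤)
    (hW : ∀ n, ∀ᵐ ω ∂μ, ω ∈ F n → 2 ^ n * w ω ≤ W ω) :
    ∃ g : Ω → ℝ, Measurable g ∧ ∫⁻ ω, ENNReal.ofReal (w ω * g ω ^ 2) ∂μ < ⊤ ∧
      ∫⁻ ω, ENNReal.ofReal (W ω * g ω ^ 2) ∂μ = ⊤ := by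
  set I : ℕ → ℝ≥0∞ := fun n => ∫⁻ ω in F n, ENNReal.ofReal (w ω) ∂μ
  -- `g ^ 2 = (2 ^ n * I n)⁻¹` on `F n`: then `∫_{F n} w g ^ 2 = 2⁻ⁿ` while `∫_{F n} W g ^ 2 ≥ 1`.
  set c : ℕ → ℝ≥0∞ := fun n => (2 ^ n * I n)⁻¹
  have h2n : ∀ n : ℕ, (2 : ℝ≥0∞) ^ n ≠ 0 := fun n => pow_ne_zero _ two_ne_zero
  have hc_top : ∀ n, c n ≠ ⊤ := fun n => ENNReal.inv_ne_top.2 (mul_ne_zero (h2n n) (hpos n).ne')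
  have hcI : ∀ n, c n * (2 ^ n * I n) = 1 := fun n =>
    ENNReal.inv_mul_cancel (mul_ne_zero (h2n n) (hpos n).ne')
      (ENNReal.mul_ne_top (ENNReal.pow_ne_top ENNReal.ofNat_ne_top) (hfin n))
  set G : Ω → ℝ≥0∞ := fun ω => ∑' n, (F n).indicator (fun _ => c n) ω
  have hG_mem : ∀ n, ∀ ω ∈ F n, G ω = c n := fun n ω hω => by
    simp only [G]
    rw [tsum_eq_single n fun m hmn => Set.indicator_of_notMem
      (Set.disjoint_left.1 (hFd hmn.symm) hω) _, Set.indicator_of_mem hω]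
  have hG_zero : ∀ ω, ω ∉ ⋃ n, F n → G ω = 0 := fun ω hω => by
    simp only [G, Set.indicator_of_notMem (fun h => hω (Set.mem_iUnion_of_mem _ h)),
      tsum_zero]
  have hsplit : ∀ V : Ω → ℝ, ∫⁻ ω, ENNReal.ofReal (V ω * Real.sqrt (G ω).toReal ^ 2) ∂μ =
      ∑' n, c n * ∫⁻ ω in F n, ENNReal.ofReal (V ω) ∂μ := fun V => by
    rw [← setLIntegral_eq_of_support_subset (s := ⋃ n, F n), lintegral_iUnion hFm hFd]
    · refine tsum_congr fun n => ?_
      rw [← lintegral_const_mul' _ _ (hc_top n)]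
      refine setLIntegral_congr_fun (hFm n) fun ω hω => ?_
      rw [hG_mem n ω hω, Real.sq_sqrt ENNReal.toReal_nonneg,
        ENNReal.ofReal_mul' ENNReal.toReal_nonneg, ENNReal.ofReal_toReal (hc_top n), mul_comm]
    · intro ω hω
      by_contra hnot
      exact hω (by simp [hG_zero ω hnot])
  refine ⟨fun ω => Real.sqrt (G ω).toReal,
    ((Measurable.tsum fun n => measurable_const.indicator (hFm n)).ennreal_toReal).sqrt,
    ?_, ?_⟩
  · have hgeom : ∀ n, c n * I n = 2⁻¹ ^ n := fun n => by
      simp only [c]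
      rw [ENNReal.mul_inv (.inl (h2n n)) (.inl (ENNReal.pow_ne_top ENNReal.ofNat_ne_top)),
        mul_assoc, ENNReal.inv_mul_cancel (hpos n).ne' (hfin n), mul_one, ENNReal.inv_pow]
    rw [hsplit]
    simp only [I] at hgeom
    simp_rw [hgeom, ENNReal.tsum_geometric, ENNReal.one_sub_inv_two, inv_inv]
    exact ENNReal.ofNat_lt_top
  · have hterm : ∀ n, 1 ≤ c n * ∫⁻ ω in F n, ENNReal.ofReal (W ω) ∂μ := fun n => by
      have hI : 2 ^ n * I n = ∫⁻ ω in F n, ENNReal.ofReal (2 ^ n * w ω) ∂μ := by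
        simp_rw [ENNReal.ofReal_mul (by positivity : (0 : ℝ) ≤ 2 ^ n)]
        rw [lintegral_const_mul' _ _ ENNReal.ofReal_ne_top, ENNReal.ofReal_pow zero_le_two,
          ENNReal.ofReal_ofNat]
      rw [← hcI n, hI]
      exact mul_le_mul_right (lintegral_mono_ae ((ae_restrict_iff' (hFm n)).2
        ((hW n).mono fun ω h hω => ENNReal.ofReal_le_ofReal (h hω)))) (c n)
    rw [hsplit, eq_top_iff]
    calc ⊤ = ∑' _ : ℕ, (1 : ℝ≥0∞) := (ENNReal.tsum_const_eq_top_of_ne_zero one_ne_zero).symm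
      _ ≤ _ := ENNReal.tsum_le_tsum hterm

section MultiplicationModel

variable {μ : Measure Ω} {a : Ω → ℝ} {f : ℝ → ℝ} {s₀ : ℝ}

lemma memH1_of_aInt_lt_top {u : Ω → ℂ} (hs₀ : 0 < s₀) (hlb : ∀ᵐ ω ∂μ, s₀ ≤ a ω)
    (hu : AEStronglyMeasurable u μ) (h : aInt μ a u < ⊤) : memH1 μ a u := by
  refine ⟨(memLp_two_iff_lintegral_lt_top hu).2 ?_, h⟩
  have hle : ∀ᵐ ω ∂μ, ENNReal.ofReal (‖u ω‖ ^ 2) ≤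
      ENNReal.ofReal s₀⁻¹ * ENNReal.ofReal (a ω * ‖u ω‖ ^ 2) := by
    filter_upwards [hlb] with ω hω
    have h1 : 1 ≤ s₀⁻¹ * a ω := by rwa [inv_mul_eq_div, one_le_div hs₀]
    rw [← ENNReal.ofReal_mul (inv_nonneg.2 hs₀.le)]
    refine ENNReal.ofReal_le_ofReal ?_
    nlinarith [sq_nonneg ‖u ω‖]
  calc ∫⁻ ω, ENNReal.ofReal (‖u ω‖ ^ 2) ∂μ
      ≤ ∫⁻ ω, ENNReal.ofReal s₀⁻¹ * ENNReal.ofReal (a ω * ‖u ω‖ ^ 2) ∂μ := lintegral_mono_ae hle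
    _ = ENNReal.ofReal s₀⁻¹ * aInt μ a u := lintegral_const_mul' _ _ ENNReal.ofReal_ne_top
    _ < ⊤ := ENNReal.mul_lt_top ENNReal.ofReal_lt_top h

lemma ae_eq_of_mul_add_mul_ae_eq {u v u' v' : Ω → ℂ} (ha0 : ∀ᵐ ω ∂μ, a ω ≠ 0)
    (hv : v =ᵐ[μ] v')
    (h : (fun ω => (a ω : ℂ) * u ω + (f (a ω) : ℂ) * v ω) =ᵐ[μ]
      (fun ω => (a ω : ℂ) * u' ω + (f (a ω) : ℂ) * v' ω)) :
    u =ᵐ[μ] u' := by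
  filter_upwards [ha0, hv, h] with ω hω hvω hω'
  refine mul_left_cancel₀ (Complex.ofReal_ne_zero.2 hω) ?_
  rw [hvω] at hω'
  exact add_right_cancel hω'

lemma exists_memDom_of_le_mul {C : ℝ} {uh vh : Ω → ℂ} (ha : Measurable a) (hs₀ : 0 < s₀)
    (hfa : AEMeasurable (fun ω => f (a ω)) μ)
    (hbound : ∀ᵐ ω ∂μ, s₀ ≤ a ω ∧ 0 ≤ f (a ω) ∧ f (a ω) ≤ C * a ω)
    (huh : memH1 μ a uh) (hvh : MemLp vh 2 μ) :
    ∃ u v : Ω → ℂ, memDom μ a f u v ∧ v =ᵐ[μ] uh ∧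
      (fun ω => -((a ω : ℂ) * u ω + (f (a ω) : ℂ) * v ω)) =ᵐ[μ] vh := by
  set u : Ω → ℂ := fun ω => -((vh ω + (f (a ω) : ℂ) * uh ω) / a ω) with hu
  have hum : AEStronglyMeasurable u μ :=
    ((hvh.1.aemeasurable.add ((Complex.measurable_ofReal.comp_aemeasurable hfa).mul
      huh.1.1.aemeasurable)).div (Complex.measurable_ofReal.comp ha).aemeasurable).neg
      |>.aestronglyMeasurable
  have hAu : (fun ω => (a ω : ℂ) * u ω + (f (a ω) : ℂ) * uh ω) =ᵐ[μ] fun ω => -vh ω := by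
    filter_upwards [hbound] with ω hω
    have : (a ω : ℂ) ≠ 0 := Complex.ofReal_ne_zero.2 (hs₀.trans_le hω.1).ne'
    simp only [hu]
    field_simp
    ring
  have hpt : ∀ᵐ ω ∂μ, ENNReal.ofReal (a ω * ‖u ω‖ ^ 2) ≤
      ENNReal.ofReal (2 * s₀⁻¹) * ENNReal.ofReal (‖vh ω‖ ^ 2) +
        ENNReal.ofReal (2 * C ^ 2) * ENNReal.ofReal (a ω * ‖uh ω‖ ^ 2) := by
    filter_upwards [hbound] with ω ⟨hω, hf0, hfC⟩
    rw [← ENNReal.ofReal_mul (by positivity), ← ENNReal.ofReal_mul (by positivity),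
      ← ENNReal.ofReal_add (by positivity)
        (mul_nonneg (by positivity) (mul_nonneg (hs₀.le.trans hω) (by positivity))),
      hu, norm_neg]
    exact ENNReal.ofReal_le_ofReal (mul_norm_div_sq_le _ _ hs₀ hω hf0 hfC)
  have hvh_int := (memLp_two_iff_lintegral_lt_top hvh.1).1 hvh
  have haInt : aInt μ a u < ⊤ :=
    calc aInt μ a u
        ≤ ∫⁻ ω, ENNReal.ofReal (2 * s₀⁻¹) * ENNReal.ofReal (‖vh ω‖ ^ 2) +
            ENNReal.ofReal (2 * C ^ 2) * ENNReal.ofReal (a ω * ‖uh ω‖ ^ 2) ∂μ :=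
          lintegral_mono_ae hpt
      _ = ENNReal.ofReal (2 * s₀⁻¹) * ∫⁻ ω, ENNReal.ofReal (‖vh ω‖ ^ 2) ∂μ +
            ENNReal.ofReal (2 * C ^ 2) * aInt μ a uh := by
          have hvm : AEMeasurable (fun ω => ENNReal.ofReal (‖vh ω‖ ^ 2)) μ :=
            (hvh.1.norm.aemeasurable.pow_const 2).ennreal_ofReal
          rw [lintegral_add_left' (hvm.const_mul _),
            lintegral_const_mul' _ _ ENNReal.ofReal_ne_top,
            lintegral_const_mul' _ _ ENNReal.ofReal_ne_top, aInt]
      _ < ⊤ := ENNReal.add_lt_top.2 ⟨ENNReal.mul_lt_top ENNReal.ofReal_lt_top hvh_int,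
          ENNReal.mul_lt_top ENNReal.ofReal_lt_top huh.2⟩
  refine ⟨u, uh, ⟨memH1_of_aInt_lt_top hs₀ (hbound.mono fun _ h => h.1) hum haInt, huh,
    (memLp_congr_ae hAu).2 hvh.neg⟩, .rfl, ?_⟩
  filter_upwards [hAu] with ω hω
  rw [hω, neg_neg]

lemma exists_measurableSet_near_lt [SigmaFinite μ] {s : Set ℝ} {g : ℝ → ℝ} {x B δ : ℝ}
    (ha : Measurable a) (hmem : ∀ᵐ ω ∂μ, a ω ∈ s)
    (hx : ∀ ε > 0, μ {ω | |a ω - x| < ε} ≠ 0)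
    (hg : ContinuousWithinAt g s x) (hB : B < g x) (hδ : 0 < δ) :
    ∃ F, MeasurableSet F ∧ 0 < μ F ∧ μ F < ⊤ ∧ (∀ ω ∈ F, |a ω - x| < δ) ∧
      ∀ᵐ ω ∂μ, ω ∈ F → B < g (a ω) := by
  obtain ⟨ε, hε, hball⟩ := Metric.mem_nhdsWithin_iff.1 (hg.eventually_const_lt hB)
  have hE : MeasurableSet {ω | |a ω - x| < min ε δ} :=
    measurableSet_lt ((ha.sub measurable_const).abs) measurable_const
  obtain ⟨F, hFm, hFE, hF0, hFfin⟩ := Measure.exists_subset_measure_lt_top hE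
    (pos_iff_ne_zero.2 (hx _ (lt_min hε hδ)))
  refine ⟨F, hFm, hF0, hFfin, fun ω hω => (hFE hω).trans_le (min_le_right _ _), ?_⟩
  filter_upwards [hmem] with ω has hω
  refine hball ⟨?_, has⟩
  rw [Metric.mem_ball, Real.dist_eq]
  exact (hFE hω).trans_le (min_le_left _ _)

lemma exists_disjoint_sets_two_pow_mul_le_sq_div [SigmaFinite μ] {σS : Set ℝ}
    (ha : Measurable a) (hcl : IsClosed σS) (hs₀ : 0 < s₀) (hlb : ∀ s ∈ σS, s₀ ≤ s)
    (hmem : ∀ᵐ ω ∂μ, a ω ∈ σS)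
    (hmin : ∀ s ∈ σS, ∀ ε > 0, μ {ω | |a ω - s| < ε} ≠ 0) (hfc : ContinuousOn f σS)
    (hunb : ¬BddAbove ((fun s => f s / s) '' σS)) :
    ∃ F : ℕ → Set Ω, (∀ n, MeasurableSet (F n)) ∧ Pairwise (Function.onFun Disjoint F) ∧
      (∀ n, 0 < ∫⁻ ω in F n, ENNReal.ofReal (a ω) ∂μ) ∧
      (∀ n, ∫⁻ ω in F n, ENNReal.ofReal (a ω) ∂μ ≠ ⊤) ∧
      ∀ n, ∀ᵐ ω ∂μ, ω ∈ F n → 2 ^ n * a ω ≤ f (a ω) ^ 2 / a ω := by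
  have hratio : ContinuousOn (fun s => f s / s) σS :=
    hfc.div continuousOn_id fun s hs => (hs₀.trans_le (hlb s hs)).ne'
  obtain ⟨S, hS, hsep⟩ := exists_seq_add_one_lt fun n =>
    frequently_atTop_mem_lt_of_not_bddAbove hcl ⟨s₀, hlb⟩ hratio hunb (2 ^ n)
  choose F hFm hF0 hFfin hFnear hFratio using fun n =>
    exists_measurableSet_near_lt ha hmem (hmin _ (hS n).1) (hratio _ (hS n).1) (hS n).2
      (one_half_pos : (0 : ℝ) < 1 / 2)
  refine ⟨F, hFm, fun m n hmn => Set.disjoint_left.2 fun ω hωm hωn => ?_, fun n => ?_,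
    fun n => ?_, fun n => ?_⟩
  · have hm := abs_lt.1 (hFnear m ω hωm)
    have hn := abs_lt.1 (hFnear n ω hωn)
    rcases hmn.lt_or_gt with h | h
    · linarith [hsep m n h]
    · linarith [hsep n m h]
  · calc 0 < ENNReal.ofReal s₀ * μ (F n) :=
          ENNReal.mul_pos (ENNReal.ofReal_pos.2 hs₀).ne' (hF0 n).ne'
      _ = ∫⁻ _ in F n, ENNReal.ofReal s₀ ∂μ := (setLIntegral_const _ _).symm
      _ ≤ ∫⁻ ω in F n, ENNReal.ofReal (a ω) ∂μ := lintegral_mono_ae (ae_restrict_of_ae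
          (hmem.mono fun ω h => ENNReal.ofReal_le_ofReal (hlb _ h)))
  · refine ne_top_of_le_ne_top
      (ENNReal.mul_ne_top (ENNReal.ofReal_ne_top (r := S n + 1)) (hFfin n).ne) ?_
    calc ∫⁻ ω in F n, ENNReal.ofReal (a ω) ∂μ ≤ ∫⁻ _ in F n, ENNReal.ofReal (S n + 1) ∂μ :=
          setLIntegral_mono' (hFm n) fun ω hω =>
            ENNReal.ofReal_le_ofReal (by linarith [(abs_lt.1 (hFnear n ω hω)).2])
      _ = _ := setLIntegral_const _ _
  · filter_upwards [hFratio n, hmem] with ω hω has hωF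
    have hpos : 0 < a ω := hs₀.trans_le (hlb _ has)
    have hgt : 2 ^ n < f (a ω) / a ω := hω hωF
    have h1 : (1 : ℝ) ≤ 2 ^ n := one_le_pow₀ one_le_two
    rw [show f (a ω) ^ 2 / a ω = (f (a ω) / a ω) ^ 2 * a ω by field_simp]
    exact mul_le_mul_of_nonneg_right (by nlinarith) hpos.le

lemma aInt_eq_lintegral_of_mul_eq {u v : Ω → ℂ} (ha0 : ∀ᵐ ω ∂μ, a ω ≠ 0)
    (h : ∀ᵐ ω ∂μ, (a ω : ℂ) * u ω = -((f (a ω) : ℂ) * v ω)) :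
    aInt μ a u = ∫⁻ ω, ENNReal.ofReal (f (a ω) ^ 2 / a ω * ‖v ω‖ ^ 2) ∂μ := by
  refine lintegral_congr_ae ?_
  filter_upwards [ha0, h] with ω hω hω'
  have hsq := congrArg (fun z => ‖z‖ ^ 2) hω'
  simp only [norm_mul, norm_neg, Complex.norm_real, Real.norm_eq_abs, mul_pow, sq_abs] at hsq
  congr 1
  field_simp
  linarith

lemma bddAbove_div_of_surjective [SigmaFinite μ] {σS : Set ℝ} (ha : Measurable a)
    (hcl : IsClosed σS) (hs₀ : 0 < s₀) (hlb : ∀ s ∈ σS, s₀ ≤ s) (hmem : ∀ᵐ ω ∂μ, a ω ∈ σS)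
    (hmin : ∀ s ∈ σS, ∀ ε > 0, μ {ω | |a ω - s| < ε} ≠ 0) (hfc : ContinuousOn f σS)
    (hsurj : ∀ uh vh : Ω → ℂ, memH1 μ a uh → MemLp vh 2 μ →
        ∃ u v : Ω → ℂ, memDom μ a f u v ∧ v =ᵐ[μ] uh ∧
          (fun ω => -((a ω : ℂ) * u ω + (f (a ω) : ℂ) * v ω)) =ᵐ[μ] vh) :
    BddAbove ((fun s => f s / s) '' σS) := by
  by_contra hunb
  have hs₀a : ∀ᵐ ω ∂μ, s₀ ≤ a ω := hmem.mono fun ω h => hlb _ h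
  obtain ⟨F, hFm, hFd, hpos, hfin, hW⟩ :=
    exists_disjoint_sets_two_pow_mul_le_sq_div ha hcl hs₀ hlb hmem hmin hfc hunb
  obtain ⟨g, hgm, hg_fin, hg_top⟩ :=
    exists_weighted_lintegral_lt_top_eq_top hFm hFd hpos hfin hW
  have hnorm : ∀ ω, ‖(g ω : ℂ)‖ ^ 2 = g ω ^ 2 := fun ω => by
    rw [Complex.norm_real, Real.norm_eq_abs, sq_abs]
  have huh : memH1 μ a fun ω => (g ω : ℂ) :=
    memH1_of_aInt_lt_top hs₀ hs₀a (Complex.measurable_ofReal.comp hgm).aestronglyMeasurable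
      (by simpa only [aInt, hnorm] using hg_fin)
  obtain ⟨u, v, hdom, hv, hAu⟩ := hsurj _ 0 huh MemLp.zero
  have hmul : ∀ᵐ ω ∂μ, (a ω : ℂ) * u ω = -((f (a ω) : ℂ) * v ω) := by
    filter_upwards [hAu] with ω hω
    exact eq_neg_of_add_eq_zero_left (neg_eq_zero.1 hω)
  have htop : aInt μ a u = ⊤ := by
    rw [aInt_eq_lintegral_of_mul_eq (hs₀a.mono fun ω h => (hs₀.trans_le h).ne') hmul, ← hg_top]
    refine lintegral_congr_ae ?_
    filter_upwards [hv] with ω hω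
    rw [hω, hnorm]
  exact hdom.1.2.ne htop

end MultiplicationModel

theorem generator_bijective_iff_general
    (μ : Measure Ω) [SigmaFinite μ] (a : Ω → ℝ) (ha : Measurable a)
    (σS : Set ℝ) (hcl : IsClosed σS)
    (s₀ : ℝ) (hs₀ : 0 < s₀) (hlb : ∀ s ∈ σS, s₀ ≤ s)
    (hmem : ∀ᵐ ω ∂μ, a ω ∈ σS)
    (hmin : ∀ s ∈ σS, ∀ ε > 0, μ {ω | |a ω - s| < ε} ≠ 0)
    (f : ℝ → ℝ) (hfc : ContinuousOn f σS) (hf0 : ∀ s ∈ σS, 0 ≤ f s) :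
    ((∀ u v u' v' : Ω → ℂ, memDom μ a f u v → memDom μ a f u' v' →
        v =ᵐ[μ] v' →
        (fun ω => (a ω : ℂ) * u ω + (f (a ω) : ℂ) * v ω) =ᵐ[μ]
          (fun ω => (a ω : ℂ) * u' ω + (f (a ω) : ℂ) * v' ω) →
        u =ᵐ[μ] u') ∧
      (∀ uh vh : Ω → ℂ, memH1 μ a uh → MemLp vh 2 μ →
        ∃ u v : Ω → ℂ, memDom μ a f u v ∧ v =ᵐ[μ] uh ∧
          (fun ω => -((a ω : ℂ) * u ω + (f (a ω) : ℂ) * v ω)) =ᵐ[μ] vh)) ↔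
      ∃ C : ℝ, ∀ s ∈ σS, f s / s ≤ C := by
  constructor
  · rintro ⟨-, hsurj⟩
    obtain ⟨C, hC⟩ := bddAbove_div_of_surjective ha hcl hs₀ hlb hmem hmin hfc hsurj
    exact ⟨C, fun s hs => hC (Set.mem_image_of_mem _ hs)⟩
  · rintro ⟨C, hC⟩
    have hbound : ∀ᵐ ω ∂μ, s₀ ≤ a ω ∧ 0 ≤ f (a ω) ∧ f (a ω) ≤ C * a ω := by
      filter_upwards [hmem] with ω h
      exact ⟨hlb _ h, hf0 _ h, (div_le_iff₀ (hs₀.trans_le (hlb _ h))).1 (hC _ h)⟩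
    refine ⟨fun u v u' v' _ _ => ae_eq_of_mul_add_mul_ae_eq
      (hbound.mono fun ω h => (hs₀.trans_le h.1).ne'), fun uh vh huh hvh => ?_⟩
    exact exists_memDom_of_le_mul ha hs₀
      (hfc.aemeasurable_comp_of_ae_mem hcl.measurableSet ha hmem) hbound huh hvh

/-- **Theorem (bijectivity of `𝒜`).** In the multiplication-operator model of
the spectral theorem (`A` = multiplication by `a`, spectrum `σS ⊂ (0,∞)`),
with `f : σ(A) → [0,∞)` continuous, the operator `𝒜(u,v) = (v, -Au - f(A)v)`
with domain `D(𝒜) = {(u,v) ∈ H¹ × H : v ∈ H¹, Au + f(A)v ∈ H}` is bijective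
(i.e. `0 ∉ σ(𝒜)`) if and only if `sup_{s ∈ σ(A)} f(s)/s < ∞`.  Bijectivity is
expressed as: injectivity (up to a.e. equality) together with surjectivity,
i.e. for every `(û, v̂) ∈ ℋ = H¹ × H` there is `(u,v) ∈ D(𝒜)` with
`v = û` and `-(Au + f(A)v) = v̂`. -/
theorem generator_bijective_iff
    (μ : Measure Ω) [SigmaFinite μ] (a : Ω → ℝ) (ha : Measurable a)
    (σS : Set ℝ) (hcl : IsClosed σS) (hne : σS.Nonempty)
    (s₀ : ℝ) (hs₀ : 0 < s₀) (hlb : ∀ s ∈ σS, s₀ ≤ s)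
    (hmem : ∀ᵐ ω ∂μ, a ω ∈ σS)
    (hmin : ∀ s ∈ σS, ∀ ε > 0, μ {ω | |a ω - s| < ε} ≠ 0)
    (f : ℝ → ℝ) (hfc : ContinuousOn f σS) (hf0 : ∀ s ∈ σS, 0 ≤ f s) :
    ((∀ u v u' v' : Ω → ℂ, memDom μ a f u v → memDom μ a f u' v' →
        v =ᵐ[μ] v' →
        (fun ω => (a ω : ℂ) * u ω + (f (a ω) : ℂ) * v ω) =ᵐ[μ]
          (fun ω => (a ω : ℂ) * u' ω + (f (a ω) : ℂ) * v' ω) →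
        u =ᵐ[μ] u') ∧
      (∀ uh vh : Ω → ℂ, memH1 μ a uh → MemLp vh 2 μ →
        ∃ u v : Ω → ℂ, memDom μ a f u v ∧ v =ᵐ[μ] uh ∧
          (fun ω => -((a ω : ℂ) * u ω + (f (a ω) : ℂ) * v ω)) =ᵐ[μ] vh)) ↔
      ∃ C : ℝ, ∀ s ∈ σS, f s / s ≤ C :=
  generator_bijective_iff_general μ a ha σS hcl s₀ hs₀ hlb hmem hmin f hfc hf0
end
end

section
/- Let ξ ∈ ℂ \ {0}. For a closed set σ ⊂ (0,∞) bounded away from 0 and a continuous f : σ → [0,∞), the quantity sup_{s ∈ σ} |s/(ξ² + f(s)ξ + s)| is finite if and only if: ξ is not a root of ξ² + f(s)ξ + s = 0 for any s ∈ σ, and −1/ξ ∉ Λ, where Λ = {ℓ > 0 : ∃ s_n ∈ σ, s_n → ∞, f(s_n)/s_n → ℓ}. -/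
open Filter

/-!
Writing `q(s) = ξ² + f(s)ξ + s`, the bound fails exactly when some sequence `sₙ ∈ σ` has
`q(sₙ)/sₙ → 0`. If `sₙ` stays frequently bounded, Bolzano–Weierstrass and the closedness of `σ`
give a root `q(s) = 0` with `s ∈ σ`. If `sₙ → ∞`, then `q(sₙ)/sₙ = ξ²/sₙ + (f(sₙ)/sₙ)ξ + 1`
forces `f(sₙ)/sₙ → -1/ξ`; this limit is real, nonnegative because `f ≥ 0`, and nonzero, so it
lies in `Λ`. Conversely a root, or a sequence witnessing `-1/ξ ∈ Λ`, makes `q(sₙ)/sₙ → 0`.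
-/

open Topology

theorem exists_bound_iff_not_exists_seq_tendsto_zero {α 𝕜 : Type*} [NormedDivisionRing 𝕜]
    {S : Set α} {u v : α → 𝕜} (hu : ∀ x ∈ S, u x ≠ 0) :
    (∃ C : ℝ, ∀ x ∈ S, ‖u x‖ ≤ C * ‖v x‖) ↔
      ¬∃ t : ℕ → α, (∀ n, t n ∈ S) ∧ Tendsto (fun n => v (t n) / u (t n)) atTop (𝓝 0) := by
  constructor
  · rintro ⟨C, hC⟩ ⟨t, htS, ht⟩
    have hlim : Tendsto (fun n => C * ‖v (t n) / u (t n)‖) atTop (𝓝 (C * 0)) :=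
      (tendsto_zero_iff_norm_tendsto_zero.mp ht).const_mul C
    have hone : ∀ n, 1 ≤ C * ‖v (t n) / u (t n)‖ := fun n => by
      have hun : 0 < ‖u (t n)‖ := norm_pos_iff.mpr (hu _ (htS n))
      rw [norm_div, ← mul_div_assoc, le_div_iff₀ hun, one_mul]
      exact hC _ (htS n)
    linarith [ge_of_tendsto' hlim hone]
  · intro hseq
    by_contra! hC
    choose t htS ht using fun n : ℕ => hC (n + 1)
    refine hseq ⟨t, htS, tendsto_zero_iff_norm_tendsto_zero.mpr ?_⟩
    refine squeeze_zero (fun _ => norm_nonneg _) (fun n => ?_)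
      tendsto_one_div_add_atTop_nhds_zero_nat
    have hun : 0 < ‖u (t n)‖ := (mul_nonneg n.cast_add_one_pos.le (norm_nonneg _)).trans_lt (ht n)
    rw [norm_div, div_le_div_iff₀ hun n.cast_add_one_pos, one_mul, mul_comm]
    exact (ht n).le

theorem IsClosed.exists_eq_of_tendsto_comp_of_frequently_mem_isBounded {X Y : Type*}
    [PseudoMetricSpace X] [ProperSpace X] [TopologicalSpace Y] [T2Space Y] {σ K : Set X}
    (hσ : IsClosed σ) {g : X → Y} (hg : ContinuousOn g σ) {t : ℕ → X} (htσ : ∀ n, t n ∈ σ)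
    (hK : Bornology.IsBounded K) (htK : ∃ᶠ n in atTop, t n ∈ K) {y : Y}
    (hy : Tendsto (g ∘ t) atTop (𝓝 y)) : ∃ x ∈ σ, g x = y := by
  obtain ⟨x, -, φ, hφ, hx⟩ := tendsto_subseq_of_frequently_bounded hK htK
  have hxσ : x ∈ σ := hσ.mem_of_tendsto hx (Eventually.of_forall fun n => htσ (φ n))
  have hgx : Tendsto (g ∘ t ∘ φ) atTop (𝓝 (g x)) :=
    (hg x hxσ).tendsto.comp
      (tendsto_nhdsWithin_of_tendsto_nhds_of_eventually_within _ hx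
        (Eventually.of_forall fun n => htσ (φ n)))
  exact ⟨x, hxσ, tendsto_nhds_unique hgx (hy.comp hφ.tendsto_atTop)⟩

theorem Filter.Tendsto.exists_ofReal_eq_of_tendsto_ofReal {α : Type*} {l : Filter α} [l.NeBot]
    {r : α → ℝ} {c : ℂ} (h : Tendsto (fun x => (r x : ℂ)) l (𝓝 c)) :
    ∃ ℓ : ℝ, (ℓ : ℂ) = c ∧ Tendsto r l (𝓝 ℓ) := by
  obtain ⟨ℓ, rfl⟩ : c ∈ Set.range ((↑) : ℝ → ℂ) :=
    Complex.isUniformEmbedding_ofReal.isClosedEmbedding.isClosed_range.mem_of_tendsto h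
      (Eventually.of_forall fun x => Set.mem_range_self (r x))
  exact ⟨ℓ, rfl, tendsto_ofReal_iff.mp h⟩

def quadAt (ξ : ℂ) (f : ℝ → ℝ) (s : ℝ) : ℂ := ξ ^ 2 + (f s : ℂ) * ξ + (s : ℂ)

section

variable {σS : Set ℝ} {f : ℝ → ℝ} {ξ : ℂ}

theorem tendsto_quadAt_div_iff (hξ : ξ ≠ 0) {t : ℕ → ℝ} (ht : Tendsto t atTop atTop) {ℓ : ℂ} :
    Tendsto (fun n => quadAt ξ f (t n) / t n) atTop (𝓝 (ℓ * ξ + 1)) ↔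
      Tendsto (fun n => ((f (t n) / t n : ℝ) : ℂ)) atTop (𝓝 ℓ) := by
  have hsmall : Tendsto (fun n => ξ ^ 2 / (t n : ℂ)) atTop (𝓝 0) := by
    simpa [div_eq_mul_inv] using
      (tendsto_ofReal_iff.mpr (tendsto_inv_atTop_zero.comp ht)).const_mul (ξ ^ 2)
  have hsplit : ∀ᶠ n in atTop, quadAt ξ f (t n) / t n =
      ξ ^ 2 / t n + ((f (t n) / t n : ℝ) : ℂ) * ξ + 1 := by
    filter_upwards [ht.eventually_gt_atTop 0] with n hn
    have : (t n : ℂ) ≠ 0 := by exact_mod_cast hn.ne'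
    simp only [quadAt]
    push_cast
    field_simp
  constructor
  · intro h
    have := ((h.sub hsmall).sub_const 1).div_const ξ
    rw [sub_zero, add_sub_cancel_right, mul_div_cancel_right₀ _ hξ] at this
    refine this.congr' ?_
    filter_upwards [hsplit] with n hn
    rw [hn]
    field_simp
    ring
  · intro h
    have := (hsmall.add (h.mul_const ξ)).add_const 1
    rw [zero_add] at this
    exact this.congr' (hsplit.mono fun n hn => hn.symm)

theorem exists_seq_quadAt_div_tendsto_zero_of_mem_limSet (hξ : ξ ≠ 0) {ℓ : ℝ}
    (hℓ : ℓ ∈ limSet σS f) (hℓξ : (ℓ : ℂ) = -(1 / ξ)) :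
    ∃ t : ℕ → ℝ, (∀ n, t n ∈ σS) ∧
      Tendsto (fun n => quadAt ξ f (t n) / t n) atTop (𝓝 0) := by
  obtain ⟨-, t, htσ, htop, hlim⟩ := hℓ
  have hzero : (ℓ : ℂ) * ξ + 1 = 0 := by
    rw [hℓξ]
    field_simp
    ring
  refine ⟨t, htσ, ?_⟩
  rw [← hzero, tendsto_quadAt_div_iff hξ htop]
  exact tendsto_ofReal_iff.mpr hlim

theorem exists_mem_limSet_of_tendsto_atTop (hξ : ξ ≠ 0) (hf0 : ∀ s ∈ σS, 0 ≤ f s)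
    {t : ℕ → ℝ} (htσ : ∀ n, t n ∈ σS) (htop : Tendsto t atTop atTop)
    (h0 : Tendsto (fun n => quadAt ξ f (t n) / t n) atTop (𝓝 0)) :
    ∃ ℓ ∈ limSet σS f, (ℓ : ℂ) = -(1 / ξ) := by
  have hzero : -(1 / ξ) * ξ + 1 = 0 := by
    field_simp
    ring
  rw [← hzero, tendsto_quadAt_div_iff hξ htop] at h0
  obtain ⟨ℓ, hℓξ, hlim⟩ := h0.exists_ofReal_eq_of_tendsto_ofReal
  have hℓ0 : 0 ≤ ℓ := ge_of_tendsto hlim <| by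
    filter_upwards [htop.eventually_gt_atTop 0] with n hn
    exact div_nonneg (hf0 _ (htσ n)) hn.le
  have hℓ : ℓ ≠ 0 := by
    rintro rfl
    simp [hξ, eq_comm] at hℓξ
  exact ⟨ℓ, ⟨hℓ0.lt_of_ne' hℓ, t, htσ, htop, hlim⟩, hℓξ⟩

theorem exists_quadAt_eq_zero_of_frequently_lt (hcl : IsClosed σS) (hpos : ∀ s ∈ σS, 0 < s)
    (hfc : ContinuousOn f σS) {t : ℕ → ℝ} (htσ : ∀ n, t n ∈ σS) {b : ℝ}
    (hb : ∃ᶠ n in atTop, t n < b)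
    (h0 : Tendsto (fun n => quadAt ξ f (t n) / t n) atTop (𝓝 0)) :
    ∃ s ∈ σS, quadAt ξ f s = 0 := by
  have hne : ∀ s ∈ σS, (s : ℂ) ≠ 0 := fun s hs => Complex.ofReal_ne_zero.mpr (hpos s hs).ne'
  have hcont : ContinuousOn (fun s => quadAt ξ f s / s) σS := by
    unfold quadAt
    fun_prop (disch := assumption)
  obtain ⟨s, hs, hs0⟩ := hcl.exists_eq_of_tendsto_comp_of_frequently_mem_isBounded hcont htσ
    (Metric.isBounded_Icc 0 b) (hb.mono fun n hn => ⟨(hpos _ (htσ n)).le, hn.le⟩) h0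
  exact ⟨s, hs, (div_eq_zero_iff.mp hs0).resolve_right (hne s hs)⟩

theorem exists_seq_quadAt_div_tendsto_zero_iff (hcl : IsClosed σS) (hpos : ∀ s ∈ σS, 0 < s)
    (hfc : ContinuousOn f σS) (hf0 : ∀ s ∈ σS, 0 ≤ f s) (hξ : ξ ≠ 0) :
    (∃ t : ℕ → ℝ, (∀ n, t n ∈ σS) ∧ Tendsto (fun n => quadAt ξ f (t n) / t n) atTop (𝓝 0)) ↔
      (∃ s ∈ σS, quadAt ξ f s = 0) ∨ ∃ ℓ ∈ limSet σS f, (ℓ : ℂ) = -(1 / ξ) := by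
  constructor
  · rintro ⟨t, htσ, h0⟩
    by_cases htop : Tendsto t atTop atTop
    · exact .inr (exists_mem_limSet_of_tendsto_atTop hξ hf0 htσ htop h0)
    · obtain ⟨b, hb⟩ : ∃ b, ∃ᶠ n in atTop, t n < b := by
        simpa only [tendsto_atTop, not_forall, not_eventually, not_le] using htop
      exact .inl (exists_quadAt_eq_zero_of_frequently_lt hcl hpos hfc htσ hb h0)
  · rintro (⟨s, hs, hroot⟩ | ⟨ℓ, hℓ, hℓξ⟩)
    · exact ⟨fun _ => s, fun _ => hs, by simp [hroot]⟩
    · exact exists_seq_quadAt_div_tendsto_zero_of_mem_limSet hξ hℓ hℓξ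

end

theorem sup_finite_iff_not_root_general (σS : Set ℝ) (hcl : IsClosed σS)
    (s₀ : ℝ) (hs₀ : 0 < s₀) (hlb : ∀ s ∈ σS, s₀ ≤ s)
    (f : ℝ → ℝ) (hfc : ContinuousOn f σS) (hf0 : ∀ s ∈ σS, 0 ≤ f s)
    (ξ : ℂ) (hξ : ξ ≠ 0) :
    (∃ C : ℝ, ∀ s ∈ σS, ‖(s : ℂ)‖ ≤
        C * ‖ξ ^ 2 + (f s : ℂ) * ξ + (s : ℂ)‖) ↔
      ((∀ s ∈ σS, ξ ^ 2 + (f s : ℂ) * ξ + (s : ℂ) ≠ 0) ∧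
        ∀ ℓ ∈ limSet σS f, ((ℓ : ℝ) : ℂ) ≠ -(1 / ξ)) := by
  have hpos : ∀ s ∈ σS, 0 < s := fun s hs => hs₀.trans_le (hlb s hs)
  have hne : ∀ s ∈ σS, (s : ℂ) ≠ 0 := fun s hs => Complex.ofReal_ne_zero.mpr (hpos s hs).ne'
  calc (∃ C : ℝ, ∀ s ∈ σS, ‖(s : ℂ)‖ ≤ C * ‖quadAt ξ f s‖)
      ↔ ¬∃ t : ℕ → ℝ, (∀ n, t n ∈ σS) ∧
          Tendsto (fun n => quadAt ξ f (t n) / t n) atTop (𝓝 0) :=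
        exists_bound_iff_not_exists_seq_tendsto_zero hne
    _ ↔ ¬((∃ s ∈ σS, quadAt ξ f s = 0) ∨ ∃ ℓ ∈ limSet σS f, (ℓ : ℂ) = -(1 / ξ)) :=
        not_congr (exists_seq_quadAt_div_tendsto_zero_iff hcl hpos hfc hf0 hξ)
    _ ↔ _ := by simp only [not_or, not_exists, not_and, quadAt]

/-- **Finiteness of `sup_{s∈σ} |s/(ξ² + f(s)ξ + s)|`.** Let `ξ ∈ ℂ \ {0}`,
`σS ⊂ (0,∞)` closed and bounded away from `0`, and `f : σS → [0,∞)` continuous.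
Then the quantity `sup_{s ∈ σS} |s / (ξ² + f(s)ξ + s)|` is finite (equivalently,
there is `C` with `|s| ≤ C|ξ² + f(s)ξ + s|` for all `s ∈ σS`) if and only if
`ξ` is not a root of `ξ² + f(s)ξ + s = 0` for any `s ∈ σS`, and `-1/ξ ∉ Λ`. -/
theorem sup_finite_iff_not_root (σS : Set ℝ) (hcl : IsClosed σS) (hne : σS.Nonempty)
    (s₀ : ℝ) (hs₀ : 0 < s₀) (hlb : ∀ s ∈ σS, s₀ ≤ s)
    (f : ℝ → ℝ) (hfc : ContinuousOn f σS) (hf0 : ∀ s ∈ σS, 0 ≤ f s)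
    (ξ : ℂ) (hξ : ξ ≠ 0) :
    (∃ C : ℝ, ∀ s ∈ σS, ‖(s : ℂ)‖ ≤
        C * ‖ξ ^ 2 + (f s : ℂ) * ξ + (s : ℂ)‖) ↔
      ((∀ s ∈ σS, ξ ^ 2 + (f s : ℂ) * ξ + (s : ℂ) ≠ 0) ∧
        ∀ ℓ ∈ limSet σS f, ((ℓ : ℝ) : ℂ) ≠ -(1 / ξ)) :=
  sup_finite_iff_not_root_general σS hcl s₀ hs₀ hlb f hfc hf0 ξ hξ
end

section
/- Let A be strictly positive selfadjoint, f : σ(A) → [0,∞) continuous, and 𝒵 = {s ∈ σ(A) : f(s) = 0}. If the spectral projection E_A(𝒵) is nonzero, then there exists a nonzero initial datum z₀ = (0, A^{-1/2}w) with w a unit vector in E_A(𝒵)H, such that the solution z(t) = (sin(t√A)A^{-1}w, cos(t√A)A^{-1/2}w) to ż = 𝒜z has constant energy ½‖z(t)‖²_ℋ = ½‖A^{-1/2}w‖² > 0 for all t ≥ 0. -/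
open MeasureTheory Filter

/-! Since `f ∘ a` vanishes on a set of positive measure, `w` can be taken to be the normalised
indicator of a finite-measure piece of that set. Energy conservation then holds pointwise in the
spectral variable: at `s > 0` the energy density is `s · sin²(t√s)/s² + cos²(t√s)/s = 1/s` times
`|w|²`, and `s ≥ s₀ > 0` dominates everything by the integrable `|w|²/s₀`. -/

theorem energy_density_eq {x : ℝ} (hx : 0 < x) (t : ℝ) (z : ℂ) :
    x * ‖((Real.sin (t * Real.sqrt x) / x : ℝ) : ℂ) * z‖ ^ 2 +
        ‖((Real.cos (t * Real.sqrt x) / Real.sqrt x : ℝ) : ℂ) * z‖ ^ 2 =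
      1 / x * ‖z‖ ^ 2 := by
  have hsqrt : Real.sqrt x ^ 2 = x := Real.sq_sqrt hx.le
  calc _ = (Real.sin (t * Real.sqrt x) ^ 2 + Real.cos (t * Real.sqrt x) ^ 2) *
          (1 / x * ‖z‖ ^ 2) := by
        simp only [norm_mul, Complex.norm_real, Real.norm_eq_abs, mul_pow, sq_abs, div_pow, hsqrt]
        field_simp
    _ = _ := by rw [Real.sin_sq_add_cos_sq, one_mul]

section

variable {Ω : Type*} [MeasurableSpace Ω] {μ : Measure Ω}

theorem exists_unit_memLp_two_eq_zero_off [SigmaFinite μ] {Z : Set Ω}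
    (hZ : MeasurableSet Z) (hμZ : μ Z ≠ 0) :
    ∃ w : Ω → ℂ, MemLp w 2 μ ∧ ∫ ω, ‖w ω‖ ^ 2 ∂μ = 1 ∧ ∀ ω ∉ Z, w ω = 0 := by
  obtain ⟨S, hS, hSZ, hSpos, hSfin⟩ :=
    Measure.exists_subset_measure_lt_top hZ (pos_iff_ne_zero.2 hμZ)
  have hm : 0 < μ.real S := ENNReal.toReal_pos hSpos.ne' hSfin.ne
  have hnorm_sq : (fun ω => ‖S.indicator (fun _ => ((Real.sqrt (μ.real S))⁻¹ : ℂ)) ω‖ ^ 2) =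
      S.indicator fun _ => (μ.real S)⁻¹ := by
    ext ω
    by_cases hω : ω ∈ S <;> simp [hω, hm.le]
  refine ⟨S.indicator fun _ => ((Real.sqrt (μ.real S))⁻¹ : ℂ),
    memLp_indicator_const 2 hS _ (Or.inr hSfin.ne), ?_,
    fun ω hω => Set.indicator_of_notMem (fun h => hω (hSZ h)) _⟩
  rw [hnorm_sq, integral_indicator_const _ hS, smul_eq_mul, mul_inv_cancel₀ hm.ne']

variable {a : Ω → ℝ} {w : Ω → ℂ} {s₀ : ℝ}

theorem integrable_inv_mul_norm_sq (hw : MemLp w 2 μ) (ha : AEMeasurable a μ) (hs₀ : 0 < s₀)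
    (hlb : ∀ᵐ ω ∂μ, s₀ ≤ a ω) : Integrable (fun ω => 1 / a ω * ‖w ω‖ ^ 2) μ := by
  refine ((memLp_two_iff_integrable_sq_norm hw.1).1 hw).bdd_mul (c := s₀⁻¹)
    (by fun_prop : AEMeasurable _ μ).aestronglyMeasurable ?_
  filter_upwards [hlb] with ω hω
  rw [norm_div, norm_one, Real.norm_of_nonneg (hs₀.trans_le hω).le, one_div]
  exact inv_anti₀ hs₀ hω

theorem integral_inv_mul_norm_sq_pos (hint : Integrable (fun ω => 1 / a ω * ‖w ω‖ ^ 2) μ)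
    (hpos : ∀ᵐ ω ∂μ, 0 < a ω) (hw : ∫ ω, ‖w ω‖ ^ 2 ∂μ ≠ 0) :
    0 < ∫ ω, 1 / a ω * ‖w ω‖ ^ 2 ∂μ := by
  have hnonneg : 0 ≤ᵐ[μ] fun ω => 1 / a ω * ‖w ω‖ ^ 2 := by
    filter_upwards [hpos] with ω hω using by positivity
  refine (integral_nonneg_of_ae hnonneg).lt_of_ne fun h => hw (integral_eq_zero_of_ae ?_)
  filter_upwards [(integral_eq_zero_iff_of_nonneg_ae hnonneg hint).1 h.symm, hpos]
    with ω hω hωpos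
  have hzero : 1 / a ω * ‖w ω‖ ^ 2 = 0 := hω
  simpa [hωpos.ne'] using hzero

theorem energy_conservation (hw : MemLp w 2 μ) (ha : AEMeasurable a μ) (hs₀ : 0 < s₀)
    (hlb : ∀ᵐ ω ∂μ, s₀ ≤ a ω) (t : ℝ) :
    (∫ ω, a ω * ‖((Real.sin (t * Real.sqrt (a ω)) / a ω : ℝ) : ℂ) * w ω‖ ^ 2 ∂μ) +
        ∫ ω, ‖((Real.cos (t * Real.sqrt (a ω)) / Real.sqrt (a ω) : ℝ) : ℂ) * w ω‖ ^ 2 ∂μ =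
      ∫ ω, 1 / a ω * ‖w ω‖ ^ 2 ∂μ := by
  have hpos : ∀ᵐ ω ∂μ, 0 < a ω := hlb.mono fun ω h => hs₀.trans_le h
  have hdensity := hpos.mono fun ω h => energy_density_eq h t (w ω)
  have hbound := integrable_inv_mul_norm_sq hw ha hs₀ hlb
  have hwm := hw.1.aemeasurable
  have hsin : Integrable
      (fun ω => a ω * ‖((Real.sin (t * Real.sqrt (a ω)) / a ω : ℝ) : ℂ) * w ω‖ ^ 2) μ := by
    refine hbound.mono' (by fun_prop : AEMeasurable _ μ).aestronglyMeasurable ?_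
    filter_upwards [hdensity, hpos] with ω h hω
    rw [← h, Real.norm_of_nonneg (by positivity)]
    exact le_add_of_nonneg_right (by positivity)
  have hcos : Integrable
      (fun ω => ‖((Real.cos (t * Real.sqrt (a ω)) / Real.sqrt (a ω) : ℝ) : ℂ) * w ω‖ ^ 2) μ := by
    refine hbound.mono' (by fun_prop : AEMeasurable _ μ).aestronglyMeasurable ?_
    filter_upwards [hdensity, hpos] with ω h hω
    rw [← h, Real.norm_of_nonneg (by positivity)]
    exact le_add_of_nonneg_left (by positivity)
  rw [← integral_add hsin hcos]
  exact integral_congr_ae hdensity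

end

theorem constant_energy_solution_general {Ω : Type*} [MeasurableSpace Ω]
    (μ : Measure Ω) [SigmaFinite μ] (a : Ω → ℝ) (ha : Measurable a)
    (σS : Set ℝ) (hcl : IsClosed σS)
    (s₀ : ℝ) (hs₀ : 0 < s₀) (hlb : ∀ s ∈ σS, s₀ ≤ s)
    (hmem : ∀ᵐ ω ∂μ, a ω ∈ σS)
    (f : ℝ → ℝ) (hfc : ContinuousOn f σS)
    (hZ : μ {ω | a ω ∈ σS ∧ f (a ω) = 0} ≠ 0) :
    ∃ w : Ω → ℂ, MemLp w 2 μ ∧ (∫ ω, ‖w ω‖ ^ 2 ∂μ) = 1 ∧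
      (∀ᵐ ω ∂μ, f (a ω) ≠ 0 → w ω = 0) ∧
      0 < (1 / 2 : ℝ) * ∫ ω, (1 / a ω) * ‖w ω‖ ^ 2 ∂μ ∧
      ∀ t : ℝ, 0 ≤ t →
        (1 / 2 : ℝ) *
            ((∫ ω, a ω * ‖((Real.sin (t * Real.sqrt (a ω)) / a ω : ℝ) : ℂ) * w ω‖ ^ 2 ∂μ) +
              ∫ ω, ‖((Real.cos (t * Real.sqrt (a ω)) / Real.sqrt (a ω) : ℝ) : ℂ) * w ω‖ ^ 2 ∂μ) =
          (1 / 2 : ℝ) * ∫ ω, (1 / a ω) * ‖w ω‖ ^ 2 ∂μ := by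
  have hZ_meas : MeasurableSet {ω | a ω ∈ σS ∧ f (a ω) = 0} :=
    (hfc.preimage_isClosed_of_isClosed hcl isClosed_singleton).measurableSet.preimage ha
  have hlb_ae : ∀ᵐ ω ∂μ, s₀ ≤ a ω := hmem.mono fun ω h => hlb _ h
  obtain ⟨w, hw, hnorm, hvanish⟩ := exists_unit_memLp_two_eq_zero_off hZ_meas hZ
  have hpos : 0 < ∫ ω, 1 / a ω * ‖w ω‖ ^ 2 ∂μ :=
    integral_inv_mul_norm_sq_pos (integrable_inv_mul_norm_sq hw ha.aemeasurable hs₀ hlb_ae)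
      (hlb_ae.mono fun ω h => hs₀.trans_le h) (hnorm ▸ one_ne_zero)
  refine ⟨w, hw, hnorm, ae_of_all _ fun ω hf => hvanish ω fun h => hf h.2,
    mul_pos one_half_pos hpos, fun t _ => ?_⟩
  rw [energy_conservation hw ha.aemeasurable hs₀ hlb_ae t]

/-- **Solutions of constant positive energy when `E_A(𝒵) ≠ 0`.** In the
multiplication-operator model of the spectral theorem (`A` = multiplication by
`a` on `L²(μ)`, spectrum `σS ⊂ (0,∞)`), let `𝒵 = {s ∈ σ(A) : f(s) = 0}` and
assume the spectral projection `E_A(𝒵)` is nonzero, i.e.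
`μ {ω : a ω ∈ σS ∧ f(a ω) = 0} ≠ 0`.  Then there is a unit vector
`w ∈ E_A(𝒵)H`, such that the solution
`z(t) = (sin(t√A)A⁻¹w, cos(t√A)A^{-1/2}w)` of `ż = 𝒜z` with initial datum
`z₀ = (0, A^{-1/2}w)` has constant energy
`½‖z(t)‖²_ℋ = ½‖A^{-1/2}w‖² > 0` for all `t ≥ 0`. -/
theorem constant_energy_solution {Ω : Type*} [MeasurableSpace Ω]
    (μ : Measure Ω) [SigmaFinite μ] (a : Ω → ℝ) (ha : Measurable a)
    (σS : Set ℝ) (hcl : IsClosed σS) (hne : σS.Nonempty)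
    (s₀ : ℝ) (hs₀ : 0 < s₀) (hlb : ∀ s ∈ σS, s₀ ≤ s)
    (hmem : ∀ᵐ ω ∂μ, a ω ∈ σS)
    (f : ℝ → ℝ) (hfc : ContinuousOn f σS) (hf0 : ∀ s ∈ σS, 0 ≤ f s)
    (hZ : μ {ω | a ω ∈ σS ∧ f (a ω) = 0} ≠ 0) :
    ∃ w : Ω → ℂ, MemLp w 2 μ ∧ (∫ ω, ‖w ω‖ ^ 2 ∂μ) = 1 ∧
      (∀ᵐ ω ∂μ, f (a ω) ≠ 0 → w ω = 0) ∧
      0 < (1 / 2 : ℝ) * ∫ ω, (1 / a ω) * ‖w ω‖ ^ 2 ∂μ ∧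
      ∀ t : ℝ, 0 ≤ t →
        (1 / 2 : ℝ) *
            ((∫ ω, a ω * ‖((Real.sin (t * Real.sqrt (a ω)) / a ω : ℝ) : ℂ) * w ω‖ ^ 2 ∂μ) +
              ∫ ω, ‖((Real.cos (t * Real.sqrt (a ω)) / Real.sqrt (a ω) : ℝ) : ℂ) * w ω‖ ^ 2 ∂μ) =
          (1 / 2 : ℝ) * ∫ ω, (1 / a ω) * ‖w ω‖ ^ 2 ∂μ :=
  constant_energy_solution_general μ a ha σS hcl s₀ hs₀ hlb hmem f hfc hZ
end

section
/- If A⁻¹ is compact and 𝒵 = {s ∈ σ(A) : f(s) = 0} is nonempty, then E_A(𝒵) ≠ 0; consequently the semigroup generated by 𝒜 is not stable (there exist solutions of constant positive energy). -/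
open MeasureTheory Filter Topology

/-!
For `s ∈ σ(A)` with `f s = 0`, normalized indicators of `{|a - s| < ε}` are approximate
eigenvectors of `A⁻¹` for the eigenvalue `1 / s`. Compactness of `A⁻¹` lets a subsequence of
them converge, and the limit is a genuine unit eigenvector `v`, hence supported in `{a = s}`;
in particular `E_A(𝒵) ≠ 0`. On the support of `v` every frequency equals `√s`, so the energy of
the trajectory starting from `v` is constant by `sin² + cos² = 1`.
-/

theorem IsCompactOperator.exists_eigenvector_of_forall_approx {𝕜 E : Type*}
    [NontriviallyNormedField 𝕜] [NormedAddCommGroup E] [NormedSpace 𝕜 E] {T : E →L[𝕜] E}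
    (hT : IsCompactOperator T) {c : 𝕜} (hc : c ≠ 0)
    (happrox : ∀ δ > 0, ∃ u, ‖u‖ = 1 ∧ ‖T u - c • u‖ ≤ δ) :
    ∃ v, ‖v‖ = 1 ∧ T v = c • v := by
  choose u hu_norm hu_approx using fun n : ℕ => happrox (1 / (n + 1)) Nat.one_div_pos_of_nat
  have hdefect : Tendsto (fun n => T (u n) - c • u n) atTop (𝓝 0) :=
    squeeze_zero_norm hu_approx tendsto_one_div_add_atTop_nhds_zero_nat
  have hmem : ∀ n, T (u n) ∈ closure (T '' Metric.closedBall 0 1) := fun n =>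
    subset_closure ⟨u n, by simp [hu_norm], rfl⟩
  obtain ⟨y, -, φ, hφ, hy⟩ :=
    (hT.isCompact_closure_image_closedBall (f := (T : E →ₗ[𝕜] E)) 1).tendsto_subseq hmem
  -- `c • u = T u - (T u - c • u)` converges along the subsequence, hence so does `u`.
  have hu : Tendsto (u ∘ φ) atTop (𝓝 (c⁻¹ • y)) := by
    have := (hy.sub (hdefect.comp hφ.tendsto_atTop)).const_smul c⁻¹
    rw [sub_zero] at this
    refine this.congr fun n => ?_
    simp [inv_smul_smul₀ hc]
  refine ⟨c⁻¹ • y, ?_, ?_⟩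
  · exact tendsto_nhds_unique hu.norm (by simp [hu_norm])
  · rw [smul_inv_smul₀ hc]
    exact tendsto_nhds_unique ((T.continuous.tendsto _).comp hu) hy

namespace MeasureTheory

theorem Lp.integral_norm_sq_eq {α 𝕜 E : Type*} [MeasurableSpace α]
    {μ : Measure α} [RCLike 𝕜] [NormedAddCommGroup E] [InnerProductSpace 𝕜 E] (v : Lp E 2 μ) :
    ∫ ω, ‖v ω‖ ^ 2 ∂μ = ‖v‖ ^ 2 := by
  have h := inner_self_eq_norm_sq_to_K (𝕜 := 𝕜) v
  simp_rw [L2.inner_def, inner_self_eq_norm_sq_to_K, ← RCLike.ofReal_pow, integral_ofReal] at h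
  exact_mod_cast h

theorem Lp.measure_ne_zero_of_ae_ne_zero_imp_mem {α E : Type*}
    [MeasurableSpace α] {μ : Measure α} [NormedAddCommGroup E] {p : ENNReal} {v : Lp E p μ}
    (hv : v ≠ 0) {S : Set α} (hS : ∀ᵐ ω ∂μ, v ω ≠ 0 → ω ∈ S) : μ S ≠ 0 := by
  intro hS0
  apply hv
  rw [Lp.eq_zero_iff_ae_eq_zero]
  filter_upwards [hS, measure_eq_zero_iff_ae_notMem.mp hS0] with ω hmem hnotMem
  exact not_not.mp (mt hmem hnotMem)

variable {Ω 𝕜 : Type*} [MeasurableSpace Ω] {μ : Measure Ω} [RCLike 𝕜] {p : ENNReal}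

def IsMultiplicationOperator (T : Lp 𝕜 p μ → Lp 𝕜 p μ) (m : Ω → 𝕜) : Prop :=
  ∀ u : Lp 𝕜 p μ, T u =ᵐ[μ] fun ω => m ω * u ω

namespace IsMultiplicationOperator

variable {T : Lp 𝕜 p μ → Lp 𝕜 p μ} {m : Ω → 𝕜}

theorem norm_sub_smul_le (hT : IsMultiplicationOperator T m) {u : Lp 𝕜 p μ} {c : 𝕜} {δ : ℝ}
    (hδ : ∀ᵐ ω ∂μ, u ω ≠ 0 → ‖m ω - c‖ ≤ δ) : ‖T u - c • u‖ ≤ δ * ‖u‖ := by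
  refine Lp.norm_le_mul_norm_of_ae_le_mul ?_
  filter_upwards [Lp.coeFn_sub (T u) (c • u), Lp.coeFn_smul c u, hT u, hδ]
    with ω hsub hsmul hTu hδω
  rw [hsub, Pi.sub_apply, hsmul, hTu, Pi.smul_apply, smul_eq_mul, ← sub_mul, norm_mul]
  by_cases hu : u ω = 0
  · simp [hu]
  · exact mul_le_mul_of_nonneg_right (hδω hu) (norm_nonneg _)

theorem exists_norm_eq_one_norm_sub_smul_le [SigmaFinite μ] (hT : IsMultiplicationOperator T m)
    (hm : Measurable m) (hp0 : p ≠ 0) (hp : p ≠ ⊤) {c : 𝕜} {δ : ℝ}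
    (hδ : μ {ω | ‖m ω - c‖ < δ} ≠ 0) :
    ∃ u : Lp 𝕜 p μ, ‖u‖ = 1 ∧ ‖T u - c • u‖ ≤ δ := by
  have hS : MeasurableSet {ω | ‖m ω - c‖ < δ} :=
    measurableSet_lt (hm.sub_const c).norm measurable_const
  obtain ⟨B, hB, hBS, hB_pos, hB_fin⟩ :=
    Measure.exists_subset_measure_lt_top hS (pos_iff_ne_zero.mpr hδ)
  set r := μ.real B ^ (1 / p.toReal)
  have hr : 0 < r := Real.rpow_pos_of_pos (ENNReal.toReal_pos hB_pos.ne' hB_fin.ne) _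
  set u := indicatorConstLp p hB hB_fin.ne ((r⁻¹ : ℝ) : 𝕜)
  have hu : ‖u‖ = 1 := by
    rw [norm_indicatorConstLp hp0 hp, RCLike.norm_ofReal, abs_inv, abs_of_pos hr,
      inv_mul_cancel₀ hr.ne']
  refine ⟨u, hu, ?_⟩
  calc ‖T u - c • u‖ ≤ δ * ‖u‖ := hT.norm_sub_smul_le <| by
        filter_upwards [(indicatorConstLp_coeFn_notMem : ∀ᵐ ω ∂μ, ω ∉ B → u ω = 0)]
          with ω hω hu0
        exact (hBS (not_not.mp (mt hω hu0))).le
    _ = δ := by rw [hu, mul_one]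

theorem ae_eq_of_apply_eq_smul (hT : IsMultiplicationOperator T m) {v : Lp 𝕜 p μ} {c : 𝕜}
    (hv : T v = c • v) : ∀ᵐ ω ∂μ, v ω ≠ 0 → m ω = c := by
  filter_upwards [hT v, Lp.coeFn_smul c v] with ω hTv hsmul hvω
  rw [hv, hsmul, Pi.smul_apply, smul_eq_mul] at hTv
  exact (mul_right_cancel₀ hvω hTv).symm

end IsMultiplicationOperator

end MeasureTheory

section Energy

variable {Ω : Type*} [MeasurableSpace Ω] {μ : Measure Ω}

theorem integral_comp_mul_norm_sq_of_ae_eq {E : Type*} [NormedAddCommGroup E] {a : Ω → ℝ}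
    {w : Ω → E} {s : ℝ} (hw : ∀ᵐ ω ∂μ, w ω ≠ 0 → a ω = s) (φ : ℝ → ℝ) :
    ∫ ω, φ (a ω) * ‖w ω‖ ^ 2 ∂μ = φ s * ∫ ω, ‖w ω‖ ^ 2 ∂μ := by
  rw [← integral_const_mul]
  refine integral_congr_ae ?_
  filter_upwards [hw] with ω hω
  by_cases hw0 : w ω = 0
  · simp [hw0]
  · rw [hω hw0]

theorem trajectory_energy_eq_of_ae_eq {a : Ω → ℝ} {w : Ω → ℂ} {s : ℝ} (hs : 0 < s)
    (hw : ∀ᵐ ω ∂μ, w ω ≠ 0 → a ω = s) (t : ℝ) :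
    (1 / 2 : ℝ) *
        ((∫ ω, a ω * ‖((Real.sin (t * Real.sqrt (a ω)) / a ω : ℝ) : ℂ) * w ω‖ ^ 2 ∂μ) +
          ∫ ω, ‖((Real.cos (t * Real.sqrt (a ω)) / Real.sqrt (a ω) : ℝ) : ℂ) * w ω‖ ^ 2 ∂μ) =
      (1 / 2 : ℝ) * ∫ ω, (1 / a ω) * ‖w ω‖ ^ 2 ∂μ := by
  simp_rw [norm_mul, Complex.norm_real, Real.norm_eq_abs, mul_pow, sq_abs, ← mul_assoc]
  rw [integral_comp_mul_norm_sq_of_ae_eq hw fun x => x * (Real.sin (t * Real.sqrt x) / x) ^ 2,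
    integral_comp_mul_norm_sq_of_ae_eq hw fun x => (Real.cos (t * Real.sqrt x) / Real.sqrt x) ^ 2,
    integral_comp_mul_norm_sq_of_ae_eq hw fun x => 1 / x]
  have hsqrt : Real.sqrt s ^ 2 = s := Real.sq_sqrt hs.le
  field_simp
  rw [hsqrt]
  linear_combination (∫ ω, ‖w ω‖ ^ 2 ∂μ) * s * Real.sin_sq_add_cos_sq (t * Real.sqrt s)

end Energy

theorem compact_inverse_instability_general {Ω : Type*} [MeasurableSpace Ω]
    (μ : Measure Ω) [SigmaFinite μ] (a : Ω → ℝ) (ha : Measurable a)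
    (σS : Set ℝ)
    (s₀ : ℝ) (hs₀ : 0 < s₀) (hlb : ∀ s ∈ σS, s₀ ≤ s)
    (hmin : ∀ s ∈ σS, ∀ ε > 0, μ {ω | |a ω - s| < ε} ≠ 0)
    (T : Lp ℂ 2 μ →L[ℂ] Lp ℂ 2 μ) (hTcompact : IsCompactOperator (⇑T))
    (hTinv : ∀ u : Lp ℂ 2 μ,
      (T u : Ω → ℂ) =ᵐ[μ] fun ω => ((1 / a ω : ℝ) : ℂ) * (u : Ω → ℂ) ω)
    (f : ℝ → ℝ)
    (hZne : ∃ s ∈ σS, f s = 0) :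
    μ {ω | a ω ∈ σS ∧ f (a ω) = 0} ≠ 0 ∧
    ∃ w : Ω → ℂ, MemLp w 2 μ ∧ (∫ ω, ‖w ω‖ ^ 2 ∂μ) = 1 ∧
      (∀ᵐ ω ∂μ, f (a ω) ≠ 0 → w ω = 0) ∧
      0 < (1 / 2 : ℝ) * ∫ ω, (1 / a ω) * ‖w ω‖ ^ 2 ∂μ ∧
      ∀ t : ℝ, 0 ≤ t →
        (1 / 2 : ℝ) *
            ((∫ ω, a ω * ‖((Real.sin (t * Real.sqrt (a ω)) / a ω : ℝ) : ℂ) * w ω‖ ^ 2 ∂μ) +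
              ∫ ω, ‖((Real.cos (t * Real.sqrt (a ω)) / Real.sqrt (a ω) : ℝ) : ℂ) * w ω‖ ^ 2 ∂μ) =
          (1 / 2 : ℝ) * ∫ ω, (1 / a ω) * ‖w ω‖ ^ 2 ∂μ := by
  obtain ⟨s, hs, hfs⟩ := hZne
  have hs_pos : 0 < s := hs₀.trans_le (hlb s hs)
  have hTmul : IsMultiplicationOperator (⇑T) fun ω => ((1 / a ω : ℝ) : ℂ) := hTinv
  have happrox : ∀ δ > 0, ∃ u, ‖u‖ = 1 ∧ ‖T u - ((1 / s : ℝ) : ℂ) • u‖ ≤ δ := by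
    intro δ hδ
    obtain ⟨ε, hε, hinv⟩ := Metric.continuousAt_iff.mp (continuousAt_inv₀ hs_pos.ne') δ hδ
    refine hTmul.exists_norm_eq_one_norm_sub_smul_le (by fun_prop) two_ne_zero
      ENNReal.ofNat_ne_top fun h0 => hmin s hs ε hε (measure_mono_null (fun ω hω => ?_) h0)
    rw [Set.mem_ofPred_eq, ← Complex.ofReal_sub, Complex.norm_real, one_div, one_div]
    exact hinv hω
  obtain ⟨v, hv_norm, hv_eigen⟩ :=
    hTcompact.exists_eigenvector_of_forall_approx (by simp [hs_pos.ne']) happrox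
  have hv_supp : ∀ᵐ ω ∂μ, v ω ≠ 0 → a ω = s :=
    (hTmul.ae_eq_of_apply_eq_smul hv_eigen).mono fun ω h hv => by simpa using h hv
  have hv_int : ∫ ω, ‖v ω‖ ^ 2 ∂μ = 1 := by
    rw [Lp.integral_norm_sq_eq (𝕜 := ℂ), hv_norm, one_pow]
  have hv_ne : v ≠ 0 := fun h => by simp [h] at hv_norm
  refine ⟨Lp.measure_ne_zero_of_ae_ne_zero_imp_mem hv_ne
      (hv_supp.mono fun ω h hv => ⟨h hv ▸ hs, h hv ▸ hfs⟩), v, Lp.memLp v, hv_int,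
    hv_supp.mono fun ω h hf => not_not.mp fun hv => hf (h hv ▸ hfs), ?_,
    fun t _ => trajectory_energy_eq_of_ae_eq hs_pos hv_supp t⟩
  rw [integral_comp_mul_norm_sq_of_ae_eq hv_supp fun x => 1 / x, hv_int]
  positivity

/-- **Instability when `A⁻¹` is compact and `𝒵 ≠ ∅`.** In the
multiplication-operator model of the spectral theorem (`A` = multiplication by
`a` on `L²(μ)`, spectrum `σS ⊂ (0,∞)` bounded away from `0`), assume `A⁻¹`
(multiplication by `1/a`) is a compact operator, and that the zero-set
`𝒵 = {s ∈ σ(A) : f(s) = 0}` is nonempty.  Then `E_A(𝒵) ≠ 0`, i.e.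
`μ {ω : a ω ∈ σS ∧ f(a ω) = 0} ≠ 0`; consequently the semigroup is not stable:
there is a unit vector `w` supported in `{f ∘ a = 0}` whose associated
trajectory `z(t) = (sin(t√A)A⁻¹w, cos(t√A)A^{-1/2}w)` has constant positive
energy. -/
theorem compact_inverse_instability {Ω : Type*} [MeasurableSpace Ω]
    (μ : Measure Ω) [SigmaFinite μ] (a : Ω → ℝ) (ha : Measurable a)
    (σS : Set ℝ) (hcl : IsClosed σS) (hne : σS.Nonempty)
    (s₀ : ℝ) (hs₀ : 0 < s₀) (hlb : ∀ s ∈ σS, s₀ ≤ s)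
    (hmem : ∀ᵐ ω ∂μ, a ω ∈ σS)
    (hmin : ∀ s ∈ σS, ∀ ε > 0, μ {ω | |a ω - s| < ε} ≠ 0)
    (T : Lp ℂ 2 μ →L[ℂ] Lp ℂ 2 μ) (hTcompact : IsCompactOperator (⇑T))
    (hTinv : ∀ u : Lp ℂ 2 μ,
      (T u : Ω → ℂ) =ᵐ[μ] fun ω => ((1 / a ω : ℝ) : ℂ) * (u : Ω → ℂ) ω)
    (f : ℝ → ℝ) (hfc : ContinuousOn f σS) (hf0 : ∀ s ∈ σS, 0 ≤ f s)
    (hZne : ∃ s ∈ σS, f s = 0) :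
    μ {ω | a ω ∈ σS ∧ f (a ω) = 0} ≠ 0 ∧
    ∃ w : Ω → ℂ, MemLp w 2 μ ∧ (∫ ω, ‖w ω‖ ^ 2 ∂μ) = 1 ∧
      (∀ᵐ ω ∂μ, f (a ω) ≠ 0 → w ω = 0) ∧
      0 < (1 / 2 : ℝ) * ∫ ω, (1 / a ω) * ‖w ω‖ ^ 2 ∂μ ∧
      ∀ t : ℝ, 0 ≤ t →
        (1 / 2 : ℝ) *
            ((∫ ω, a ω * ‖((Real.sin (t * Real.sqrt (a ω)) / a ω : ℝ) : ℂ) * w ω‖ ^ 2 ∂μ) +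
              ∫ ω, ‖((Real.cos (t * Real.sqrt (a ω)) / Real.sqrt (a ω) : ℝ) : ℂ) * w ω‖ ^ 2 ∂μ) =
          (1 / 2 : ℝ) * ∫ ω, (1 / a ω) * ‖w ω‖ ^ 2 ∂μ :=
  compact_inverse_instability_general μ a ha σS s₀ hs₀ hlb hmin T hTcompact hTinv f hZne
end

section
/- (Necessity of exponential stability conditions.) Let A be strictly positive selfadjoint and f : σ(A) → [0,∞) continuous. If sup_{s∈σ(A)} f(s)/s = ∞, or if inf_{s∈σ(A)} f(s) = 0, then the spectral bound σ* = sup{Re ξ : ξ ∈ σ(𝒜)} satisfies σ* ≥ 0. In particular the contraction semigroup generated by 𝒜 is not exponentially stable. -/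
/-!
Every root `ξ` of `ξ² + f(s) ξ + s = 0` with `s ∈ σ(A)` is an approximate eigenvalue of `𝒜`:
on a set `F` of positive finite measure where `A` is close to `s`, the multiplier
`ξ² + f(A) ξ + A` is smaller than `η`, so the solution of `(ξ - 𝒜)(u, v) = (0, 𝟙_F)` has
`|u| > 1/η` on `F` and the resolvent cannot be bounded. If `f(s)/s` is unbounded, the larger
real root, which lies above `-2s/f(s)`, approaches `0`; if `inf f = 0`, the complex roots have
real part `-f(s)/2`, again close to `0`.
-/

open MeasureTheory Filter Complex

noncomputable section

variable {Ω : Type*} [MeasurableSpace Ω]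

lemma exists_quadratic_root_re_ge {b : ℝ} (hb : 0 ≤ b) {c : ℝ} (hc : 0 ≤ c) :
    ∃ ξ : ℂ, ξ ^ 2 + b * ξ + c = 0 ∧ -(b / 2) ≤ ξ.re ∧ -(2 * c / b) ≤ ξ.re := by
  rcases lt_or_ge (b ^ 2) (4 * c) with hneg | hnonneg
  · set m := Real.sqrt (4 * c - b ^ 2)
    have hm : (m : ℂ) ^ 2 = 4 * c - b ^ 2 := by
      exact_mod_cast Real.sq_sqrt (by linarith)
    refine ⟨-(b / 2) + m / 2 * I, ?_, by simp, ?_⟩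
    · linear_combination (m ^ 2 / 4 : ℂ) * I_sq - hm / 4
    · have hre : (-(b / 2) + m / 2 * I : ℂ).re = -(b / 2) := by simp
      rw [hre, neg_le_neg_iff]
      rcases hb.eq_or_lt with rfl | hbpos
      · simp
      · rw [div_le_div_iff₀ two_pos hbpos]
        nlinarith
  · -- this root is `-2c / (b + √(b² - 4c))`
    set d := Real.sqrt (b ^ 2 - 4 * c)
    have hd : d ^ 2 = b ^ 2 - 4 * c := Real.sq_sqrt (by linarith)
    have hd0 : 0 ≤ d := Real.sqrt_nonneg _
    refine ⟨((-b + d) / 2 : ℝ), ?_, ?_, ?_⟩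
    · have : ((-b + d) / 2) ^ 2 + b * ((-b + d) / 2) + c = 0 := by linear_combination hd / 4
      exact_mod_cast this
    · simp only [ofReal_re]; linarith
    · simp only [ofReal_re]
      rcases hb.eq_or_lt with rfl | hbpos
      · simp only [div_zero, neg_zero, zero_add]; positivity
      · have hdb : d ≤ b := by nlinarith
        have : (b - d) / 2 ≤ 2 * c / b := by
          rw [le_div_iff₀ hbpos]; nlinarith
        linarith

lemma exists_mem_half_lt_or_two_mul_div_lt {σS : Set ℝ} {f : ℝ → ℝ} (hσ : ∀ s ∈ σS, 0 < s)
    (h : (¬ ∃ C : ℝ, ∀ s ∈ σS, f s / s ≤ C) ∨ (∀ ε > 0, ∃ s ∈ σS, f s < ε))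
    {ε : ℝ} (hε : 0 < ε) :
    ∃ s ∈ σS, f s / 2 < ε ∨ 2 * s / f s < ε := by
  rcases h with hunbdd | hinf
  · push Not at hunbdd
    obtain ⟨s, hs, hlt⟩ := hunbdd (2 / ε)
    have hfs : 2 * s < ε * f s := by
      rwa [div_lt_div_iff₀ hε (hσ s hs), mul_comm (f s)] at hlt
    refine ⟨s, hs, Or.inr ?_⟩
    rw [div_lt_iff₀ (by nlinarith [hσ s hs])]
    linarith
  · obtain ⟨s, hs, hlt⟩ := hinf (2 * ε) (by positivity)
    exact ⟨s, hs, Or.inl (by linarith)⟩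

lemma Real.sSup_nonneg_of_forall_exists_gt {S : Set ℝ} (hS : ∀ ε > 0, ∃ x ∈ S, -ε < x) :
    0 ≤ sSup S := by
  by_cases hbdd : BddAbove S
  · refine le_of_forall_pos_lt_add fun ε hε => ?_
    obtain ⟨x, hxS, hx⟩ := hS ε hε
    linarith [le_csSup hbdd hxS]
  · rw [Real.sSup_of_not_bddAbove hbdd]

lemma inv_lt_norm_of_mul_eq_one {p u : ℂ} {η : ℝ} (hpu : p * u = 1) (hp : ‖p‖ < η) :
    η⁻¹ < ‖u‖ := by
  have hp0 : 0 < ‖p‖ := norm_pos_iff.mpr (left_ne_zero_of_mul_eq_one hpu)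
  rw [eq_inv_of_mul_eq_one_right hpu, norm_inv]
  exact inv_strictAnti₀ hp0 hp

def quadSymbol (f : ℝ → ℝ) (ξ : ℂ) (t : ℝ) : ℂ := ξ ^ 2 + f t * ξ + t

section Resolvent

variable {μ : Measure Ω} {a : Ω → ℝ} {f : ℝ → ℝ} {ξ : ℂ}

lemma memH1_zero : memH1 μ a 0 :=
  ⟨MemLp.zero, by simp [aInt]⟩

lemma hsq_zero_indicator_one {F : Set Ω} (hF : MeasurableSet F) :
    hsq μ a 0 (F.indicator fun _ => (1 : ℂ)) = μ F := by
  have hnorm : (fun ω => ENNReal.ofReal (‖F.indicator (fun _ => (1 : ℂ)) ω‖ ^ 2))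
      = F.indicator fun _ => 1 := by
    ext ω; by_cases hω : ω ∈ F <;> simp [hω]
  rw [hsq, hnorm, lintegral_indicator_const hF, one_mul]
  simp [aInt]

lemma ofReal_mul_measure_le_aInt {u : Ω → ℂ} {F : Set Ω} {c : ℝ} (hF : MeasurableSet F)
    (hc : ∀ᵐ ω ∂μ, ω ∈ F → c ≤ a ω * ‖u ω‖ ^ 2) :
    ENNReal.ofReal c * μ F ≤ aInt μ a u := by
  rw [← lintegral_indicator_const hF]
  refine lintegral_mono_ae (hc.mono fun ω hω => ?_)
  by_cases hωF : ω ∈ F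
  · simpa [hωF] using ENNReal.ofReal_le_ofReal (hω hωF)
  · simp [hωF]

lemma quadSymbol_mul_ae_eq {u v uh vh : Ω → ℂ}
    (h₁ : (fun ω => ξ * u ω - v ω) =ᵐ[μ] uh)
    (h₂ : (fun ω => ξ * v ω + ((a ω : ℂ) * u ω + (f (a ω) : ℂ) * v ω)) =ᵐ[μ] vh) :
    (fun ω => quadSymbol f ξ (a ω) * u ω) =ᵐ[μ] fun ω => (ξ + f (a ω)) * uh ω + vh ω := by
  filter_upwards [h₁, h₂] with ω h₁ h₂
  rw [← h₁, ← h₂, quadSymbol]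
  ring

lemma resSet.exists_bound {s₀ : ℝ} (hres : resSet μ a f ξ) (hs₀ : 0 ≤ s₀)
    (hpos : ∀ᵐ ω ∂μ, s₀ ≤ a ω) :
    ∃ C : ℝ, ∀ (F : Set Ω) (η : ℝ), MeasurableSet F → μ F < ⊤ → 0 < η →
      (∀ᵐ ω ∂μ, ω ∈ F → ‖quadSymbol f ξ (a ω)‖ < η) →
      ENNReal.ofReal (s₀ / η ^ 2) * μ F ≤ ENNReal.ofReal C * μ F := by
  obtain ⟨C, hC⟩ := hres
  refine ⟨C, fun F η hF hFfin hη happrox => ?_⟩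
  obtain ⟨u, v, -, h₁, h₂, hbound, -⟩ := hC 0 (F.indicator fun _ => 1) memH1_zero
    (memLp_indicator_const 2 hF 1 (Or.inr hFfin.ne))
  have hlow : ∀ᵐ ω ∂μ, ω ∈ F → s₀ / η ^ 2 ≤ a ω * ‖u ω‖ ^ 2 := by
    filter_upwards [quadSymbol_mul_ae_eq h₁ h₂, hpos, happrox] with ω hpu hs₀a happ hωF
    have hu : η⁻¹ < ‖u ω‖ := inv_lt_norm_of_mul_eq_one (by simpa [hωF] using hpu) (happ hωF)
    calc s₀ / η ^ 2 = s₀ * η⁻¹ ^ 2 := by ring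
      _ ≤ a ω * ‖u ω‖ ^ 2 :=
        mul_le_mul hs₀a (pow_le_pow_left₀ (by positivity) hu.le 2) (by positivity) (by linarith)
  calc ENNReal.ofReal (s₀ / η ^ 2) * μ F ≤ aInt μ a u := ofReal_mul_measure_le_aInt hF hlow
    _ ≤ hsq μ a u v := le_self_add
    _ ≤ ENNReal.ofReal C * hsq μ a 0 (F.indicator fun _ => 1) := hbound
    _ = ENNReal.ofReal C * μ F := by rw [hsq_zero_indicator_one hF]

lemma not_resSet_of_approx_root {s₀ : ℝ} (hs₀ : 0 < s₀) (hpos : ∀ᵐ ω ∂μ, s₀ ≤ a ω)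
    (happrox : ∀ η > 0, ∃ F : Set Ω, MeasurableSet F ∧ 0 < μ F ∧ μ F < ⊤ ∧
      ∀ᵐ ω ∂μ, ω ∈ F → ‖quadSymbol f ξ (a ω)‖ < η) :
    ¬ resSet μ a f ξ := by
  intro hres
  obtain ⟨C, hC⟩ := hres.exists_bound hs₀.le hpos
  set η := Real.sqrt (s₀ / (max C 0 + 1))
  have hη : 0 < η := Real.sqrt_pos.mpr (by positivity)
  have hsη : s₀ / η ^ 2 = max C 0 + 1 := by
    rw [Real.sq_sqrt (by positivity)]; field_simp
  obtain ⟨F, hF, hF0, hFfin, happ⟩ := happrox η hη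
  have hCF := hC F η hF hFfin hη happ
  rw [hsη, ENNReal.mul_le_mul_iff_left hF0.ne' hFfin.ne, ENNReal.ofReal_le_ofReal_iff'] at hCF
  rcases hCF with hCF | hCF <;> linarith [le_max_left C 0, le_max_right C 0]

lemma exists_approx_root [SigmaFinite μ] (ha : Measurable a) {σS : Set ℝ}
    (hmem : ∀ᵐ ω ∂μ, a ω ∈ σS) (hmin : ∀ s ∈ σS, ∀ ε > 0, μ {ω | |a ω - s| < ε} ≠ 0)
    (hfc : ContinuousOn f σS) {s : ℝ} (hs : s ∈ σS) (hroot : quadSymbol f ξ s = 0) :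
    ∀ η > 0, ∃ F : Set Ω, MeasurableSet F ∧ 0 < μ F ∧ μ F < ⊤ ∧
      ∀ᵐ ω ∂μ, ω ∈ F → ‖quadSymbol f ξ (a ω)‖ < η := by
  intro η hη
  have hcont : ContinuousOn (quadSymbol f ξ) σS := by unfold quadSymbol; fun_prop
  obtain ⟨δ, hδ, hnear⟩ := Metric.continuousWithinAt_iff.mp (hcont s hs) η hη
  obtain ⟨F, hF, hFE, hF0, hFfin⟩ := Measure.exists_subset_measure_lt_top
    (ha Metric.isOpen_ball.measurableSet) (pos_iff_ne_zero.mpr (hmin s hs δ hδ))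
  refine ⟨F, hF, hF0, hFfin, hmem.mono fun ω hω hωF => ?_⟩
  simpa [hroot] using hnear hω (hFE hωF)

end Resolvent

theorem spectral_bound_nonneg_general
    (μ : Measure Ω) [SigmaFinite μ] (a : Ω → ℝ) (ha : Measurable a)
    (σS : Set ℝ)
    (s₀ : ℝ) (hs₀ : 0 < s₀) (hlb : ∀ s ∈ σS, s₀ ≤ s)
    (hmem : ∀ᵐ ω ∂μ, a ω ∈ σS)
    (hmin : ∀ s ∈ σS, ∀ ε > 0, μ {ω | |a ω - s| < ε} ≠ 0)
    (f : ℝ → ℝ) (hfc : ContinuousOn f σS) (hf0 : ∀ s ∈ σS, 0 ≤ f s)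
    (h : (¬ ∃ C : ℝ, ∀ s ∈ σS, f s / s ≤ C) ∨ (∀ ε > 0, ∃ s ∈ σS, f s < ε)) :
    (∀ ε > 0, ∃ ξ : ℂ, ¬ resSet μ a f ξ ∧ -ε < ξ.re) ∧
      0 ≤ sSup (Complex.re '' {ξ : ℂ | ¬ resSet μ a f ξ}) := by
  have hpos : ∀ᵐ ω ∂μ, s₀ ≤ a ω := hmem.mono fun ω hω => hlb _ hω
  have hspec : ∀ s ∈ σS, ∀ ξ, quadSymbol f ξ s = 0 → ¬ resSet μ a f ξ := fun s hs _ hroot =>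
    not_resSet_of_approx_root hs₀ hpos (exists_approx_root ha hmem hmin hfc hs hroot)
  have hnear : ∀ ε > 0, ∃ ξ : ℂ, ¬ resSet μ a f ξ ∧ -ε < ξ.re := by
    intro ε hε
    obtain ⟨s, hs, hsmall⟩ := exists_mem_half_lt_or_two_mul_div_lt
      (fun s hs => hs₀.trans_le (hlb s hs)) h hε
    obtain ⟨ξ, hroot, hre₁, hre₂⟩ :=
      exists_quadratic_root_re_ge (hf0 s hs) (hs₀.le.trans (hlb s hs))
    exact ⟨ξ, hspec s hs ξ hroot, by rcases hsmall with h' | h' <;> linarith⟩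
  refine ⟨hnear, Real.sSup_nonneg_of_forall_exists_gt fun ε hε => ?_⟩
  obtain ⟨ξ, hξ, hre⟩ := hnear ε hε
  exact ⟨ξ.re, ⟨ξ, hξ, rfl⟩, hre⟩

/-- **Necessity of the exponential stability conditions.** In the
multiplication-operator model of the spectral theorem (`A` = multiplication by
`a`, spectrum `σS ⊂ (0,∞)`, `f : σ(A) → [0,∞)` continuous), if
`sup_{s∈σ(A)} f(s)/s = ∞` or `inf_{s∈σ(A)} f(s) = 0`, then the spectral bound
`σ* = sup {Re ξ : ξ ∈ σ(𝒜)}` satisfies `σ* ≥ 0`: indeed there are points of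
`σ(𝒜)` with real part arbitrarily close to `0` (so in particular the
contraction semigroup generated by `𝒜` is not exponentially stable). -/
theorem spectral_bound_nonneg
    (μ : Measure Ω) [SigmaFinite μ] (a : Ω → ℝ) (ha : Measurable a)
    (σS : Set ℝ) (hcl : IsClosed σS) (hne : σS.Nonempty)
    (s₀ : ℝ) (hs₀ : 0 < s₀) (hlb : ∀ s ∈ σS, s₀ ≤ s)
    (hmem : ∀ᵐ ω ∂μ, a ω ∈ σS)
    (hmin : ∀ s ∈ σS, ∀ ε > 0, μ {ω | |a ω - s| < ε} ≠ 0)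
    (f : ℝ → ℝ) (hfc : ContinuousOn f σS) (hf0 : ∀ s ∈ σS, 0 ≤ f s)
    (h : (¬ ∃ C : ℝ, ∀ s ∈ σS, f s / s ≤ C) ∨ (∀ ε > 0, ∃ s ∈ σS, f s < ε)) :
    (∀ ε > 0, ∃ ξ : ℂ, ¬ resSet μ a f ξ ∧ -ε < ξ.re) ∧
      0 ≤ sSup (Complex.re '' {ξ : ℂ | ¬ resSet μ a f ξ}) :=
  spectral_bound_nonneg_general μ a ha σS s₀ hs₀ hlb hmem hmin f hfc hf0 h
end
end

section
/- (Sufficiency for exponential stability, energy method.) Let A be strictly positive selfadjoint and f : σ(A) → [0,∞) continuous with inf_{s∈σ(A)} f(s) > 0 and sup_{s∈σ(A)} f(s)/s < ∞. Then there exist κ > 0 and M ≥ 1 such that every classical solution z(t) = (u(t), u̇(t)) of ü + Au + f(A)u̇ = 0 with z(0) ∈ D(𝒜) satisfies ‖z(t)‖²_ℋ ≤ M² e^{−2κt} ‖z(0)‖²_ℋ. -/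
/-!
Over a.e. spectral fibre `ω` the equation is the damped oscillator `ü + c u̇ + a u = 0`, `v = u̇`,
with constants `a = a ω ≥ s₀` and `c = f (a ω)` satisfying `m ≤ c ≤ C a`. For it the perturbed
energy `L = a‖u‖² + ‖v‖² + ε⟪u, v⟫` lies between `E/2` and `3E/2`, where `E = a‖u‖² + ‖v‖²`, as
soon as `ε² ≤ a`, and `L' ≤ -(ε/2) E ≤ -(ε/3) L` as soon as `ε ≤ c` and `εC ≤ 1`. Grönwall then
gives `E(t) ≤ 3 e^{-εt/3} E(0)` on every fibre with one `ε` depending only on `s₀, m, C`, and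
integrating over `ω` yields the theorem with `κ = ε/6` and `M = √3`.
-/

open MeasureTheory Filter Complex

noncomputable section

variable {Ω : Type*} [MeasurableSpace Ω]

theorem le_mul_exp_of_hasDerivAt_le_mul {f f' : ℝ → ℝ} {K t : ℝ}
    (hf : ∀ s, HasDerivAt f (f' s) s) (hbound : ∀ s, f' s ≤ K * f s) (ht : 0 ≤ t) :
    f t ≤ f 0 * Real.exp (K * t) := by
  have hcont : ContinuousOn f (Set.Icc 0 t) := fun s _ => (hf s).continuousAt.continuousWithinAt
  have := le_gronwallBound_of_liminf_deriv_right_le hcont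
    (fun s _ _ hr => (hf s).hasDerivWithinAt.liminf_right_slope_le hr) le_rfl
    (K := K) (ε := 0) (fun s _ => by rw [add_zero]; exact hbound s) t ⟨ht, le_rfl⟩
  simpa [gronwallBound_ε0] using this

section DampedOscillator

open scoped RealInnerProductSpace

variable {H : Type*} [NormedAddCommGroup H] [InnerProductSpace ℝ H]

theorem abs_mul_inner_le_of_sq_le {a ε : ℝ} (hεa : ε ^ 2 ≤ a) (x y : H) :
    |ε * ⟪x, y⟫| ≤ (a * ‖x‖ ^ 2 + ‖y‖ ^ 2) / 2 := by
  have hx : ‖ε • x‖ ^ 2 = ε ^ 2 * ‖x‖ ^ 2 := by rw [norm_smul, mul_pow, Real.norm_eq_abs, sq_abs]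
  have hadd := norm_add_sq_real (ε • x) y
  have hsub := norm_sub_sq_real (ε • x) y
  rw [hx, real_inner_smul_left] at hadd hsub
  have := mul_le_mul_of_nonneg_right hεa (sq_nonneg ‖x‖)
  rw [abs_le]
  constructor <;> nlinarith [sq_nonneg ‖ε • x + y‖, sq_nonneg ‖ε • x - y‖]

theorem damped_dissipation_le {a c C ε : ℝ} (ha : 0 < a) (hCa : c ≤ C * a) (hε : 0 ≤ ε)
    (hεC : ε * C ≤ 1) (hεc : ε ≤ c) (x y : H) :
    -2 * c * ‖y‖ ^ 2 + ε * (‖y‖ ^ 2 - a * ‖x‖ ^ 2 - c * ⟪x, y⟫) ≤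
      -(ε / 2) * (a * ‖x‖ ^ 2 + ‖y‖ ^ 2) := by
  have hc : 0 ≤ c := hε.trans hεc
  -- `‖a x + c y‖² ≥ 0` bounds `-⟪x, y⟫` by `(a‖x‖² + (c²/a)‖y‖²)/(2c)`, and `c²/a ≤ cC`.
  have hsq : 0 ≤ a ^ 2 * ‖x‖ ^ 2 + 2 * (a * c) * ⟪x, y⟫ + c ^ 2 * ‖y‖ ^ 2 := by
    have := norm_add_sq_real (a • x) (c • y)
    rw [norm_smul, norm_smul, real_inner_smul_left, real_inner_smul_right, Real.norm_eq_abs,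
      Real.norm_eq_abs, abs_of_pos ha, abs_of_nonneg hc] at this
    nlinarith [sq_nonneg ‖a • x + c • y‖]
  have hc2 : ε * c ^ 2 * ‖y‖ ^ 2 ≤ c * a * ‖y‖ ^ 2 := by
    have : ε * c ^ 2 ≤ c * a := by
      nlinarith [mul_le_mul_of_nonneg_left hCa (mul_nonneg hε hc),
        mul_le_mul_of_nonneg_left hεC (mul_nonneg hc ha.le)]
    exact mul_le_mul_of_nonneg_right this (sq_nonneg _)
  have hinner : a * (-(ε * a * ‖x‖ ^ 2) - c * ‖y‖ ^ 2) ≤ a * (2 * ε * c * ⟪x, y⟫) := by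
    nlinarith [mul_nonneg hε hsq]
  nlinarith [le_of_mul_le_mul_left hinner ha, sq_nonneg ‖y‖]

theorem hasDerivAt_damped_lyapunov {a c ε : ℝ} {u v : ℝ → H}
    (hu : ∀ s, HasDerivAt u (v s) s) (hv : ∀ s, HasDerivAt v (-(a • u s + c • v s)) s) (s : ℝ) :
    HasDerivAt (fun s => a * ‖u s‖ ^ 2 + ‖v s‖ ^ 2 + ε * ⟪u s, v s⟫)
      (-2 * c * ‖v s‖ ^ 2 + ε * (‖v s‖ ^ 2 - a * ‖u s‖ ^ 2 - c * ⟪u s, v s⟫)) s := by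
  refine (((((hu s).norm_sq).const_mul a).add (hv s).norm_sq).add
    (((hu s).inner ℝ (hv s)).const_mul ε)).congr_deriv ?_
  simp only [inner_neg_right, inner_add_right, real_inner_smul_right, real_inner_self_eq_norm_sq,
    real_inner_comm (u s)]
  ring

theorem damped_energy_le {a c C ε : ℝ} (ha : 0 < a) (hCa : c ≤ C * a) (hε : 0 < ε)
    (hεa : ε ^ 2 ≤ a) (hεC : ε * C ≤ 1) (hεc : ε ≤ c) {u v : ℝ → H}
    (hu : ∀ s, HasDerivAt u (v s) s) (hv : ∀ s, HasDerivAt v (-(a • u s + c • v s)) s)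
    {t : ℝ} (ht : 0 ≤ t) :
    a * ‖u t‖ ^ 2 + ‖v t‖ ^ 2 ≤ 3 * Real.exp (-(ε / 3 * t)) * (a * ‖u 0‖ ^ 2 + ‖v 0‖ ^ 2) := by
  set E := fun s => a * ‖u s‖ ^ 2 + ‖v s‖ ^ 2
  set L := fun s => a * ‖u s‖ ^ 2 + ‖v s‖ ^ 2 + ε * ⟪u s, v s⟫
  have hLE : ∀ s, |L s - E s| ≤ E s / 2 := fun s => by
    simp only [L, E, add_sub_cancel_left]
    exact abs_mul_inner_le_of_sq_le hεa (u s) (v s)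
  have hdecay : L t ≤ L 0 * Real.exp (-(ε / 3) * t) :=
    le_mul_exp_of_hasDerivAt_le_mul (hasDerivAt_damped_lyapunov hu hv) (fun s => by
      have := damped_dissipation_le ha hCa hε.le hεC hεc (u s) (v s)
      nlinarith [(abs_le.1 (hLE s)).2]) ht
  rw [neg_mul] at hdecay
  show E t ≤ 3 * Real.exp (-(ε / 3 * t)) * E 0
  have hexp := Real.exp_pos (-(ε / 3 * t))
  calc E t ≤ 2 * L t := by linarith [(abs_le.1 (hLE t)).1]
    _ ≤ 2 * (L 0 * Real.exp (-(ε / 3 * t))) := by linarith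
    _ ≤ 3 * Real.exp (-(ε / 3 * t)) * E 0 := by nlinarith [(abs_le.1 (hLE 0)).2]

end DampedOscillator

theorem hsq_le_ofReal_mul_of_ae_le {μ : Measure Ω} {a : Ω → ℝ} {u v u₀ v₀ : Ω → ℂ} {K : ℝ}
    (hK : 0 ≤ K) (ha : ∀ᵐ ω ∂μ, 0 ≤ a ω) (hv₀ : AEStronglyMeasurable v₀ μ)
    (h : ∀ᵐ ω ∂μ, a ω * ‖u ω‖ ^ 2 + ‖v ω‖ ^ 2 ≤ K * (a ω * ‖u₀ ω‖ ^ 2 + ‖v₀ ω‖ ^ 2)) :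
    hsq μ a u v ≤ ENNReal.ofReal K * hsq μ a u₀ v₀ := by
  have hv₀' : AEMeasurable (fun ω => ENNReal.ofReal (‖v₀ ω‖ ^ 2)) μ :=
    (hv₀.norm.aemeasurable.pow_const 2).ennreal_ofReal
  have hpointwise : ∀ᵐ ω ∂μ, ENNReal.ofReal (a ω * ‖u ω‖ ^ 2) + ENNReal.ofReal (‖v ω‖ ^ 2) ≤
      ENNReal.ofReal K * (ENNReal.ofReal (a ω * ‖u₀ ω‖ ^ 2) + ENNReal.ofReal (‖v₀ ω‖ ^ 2)) := by
    filter_upwards [ha, h] with ω haω hω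
    rw [← ENNReal.ofReal_add (by positivity) (by positivity),
      ← ENNReal.ofReal_add (by positivity) (by positivity), ← ENNReal.ofReal_mul hK]
    exact ENNReal.ofReal_le_ofReal hω
  unfold hsq aInt
  calc _ ≤ ∫⁻ ω, ENNReal.ofReal (a ω * ‖u ω‖ ^ 2) + ENNReal.ofReal (‖v ω‖ ^ 2) ∂μ :=
        le_lintegral_add _ _
    _ ≤ ∫⁻ ω, ENNReal.ofReal K *
          (ENNReal.ofReal (a ω * ‖u₀ ω‖ ^ 2) + ENNReal.ofReal (‖v₀ ω‖ ^ 2)) ∂μ :=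
        lintegral_mono_ae hpointwise
    _ = _ := by rw [lintegral_const_mul' _ _ ENNReal.ofReal_ne_top, lintegral_add_right' _ hv₀']

theorem exists_damping_params {σS : Set ℝ} {f : ℝ → ℝ} {s₀ : ℝ} (hs₀ : 0 < s₀)
    (hlb : ∀ s ∈ σS, s₀ ≤ s) (hinf : ∃ m : ℝ, 0 < m ∧ ∀ s ∈ σS, m ≤ f s)
    (hsub : ∃ C : ℝ, ∀ s ∈ σS, f s / s ≤ C) :
    ∃ C ε : ℝ, 0 < ε ∧ ε * C ≤ 1 ∧
      ∀ s ∈ σS, 0 < s ∧ f s ≤ C * s ∧ ε ^ 2 ≤ s ∧ ε ≤ f s := by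
  obtain ⟨m, hm, hmf⟩ := hinf
  obtain ⟨C₀, hC₀⟩ := hsub
  set C := max C₀ 1
  have hC : 0 < C := lt_max_of_lt_right one_pos
  set ε := min m (min C⁻¹ (Real.sqrt s₀))
  have hεC : ε ≤ C⁻¹ := (min_le_right _ _).trans (min_le_left _ _)
  have hεs₀ : ε ≤ Real.sqrt s₀ := (min_le_right _ _).trans (min_le_right _ _)
  refine ⟨C, ε, lt_min hm (lt_min (inv_pos.2 hC) (Real.sqrt_pos.2 hs₀)),
    (mul_le_mul_of_nonneg_right hεC hC.le).trans_eq (inv_mul_cancel₀ hC.ne'), fun s hs => ?_⟩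
  have hspos : 0 < s := hs₀.trans_le (hlb s hs)
  refine ⟨hspos, (div_le_iff₀ hspos).1 ((hC₀ s hs).trans (le_max_left _ _)), ?_,
    (min_le_left _ _).trans (hmf s hs)⟩
  calc ε ^ 2 ≤ Real.sqrt s₀ ^ 2 := by gcongr
    _ ≤ s := (Real.sq_sqrt hs₀.le).trans_le (hlb s hs)

theorem exponential_stability_general
    (μ : Measure Ω) (a : Ω → ℝ)
    (σS : Set ℝ)
    (s₀ : ℝ) (hs₀ : 0 < s₀) (hlb : ∀ s ∈ σS, s₀ ≤ s)
    (hmem : ∀ᵐ ω ∂μ, a ω ∈ σS)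
    (f : ℝ → ℝ)
    (hinf : ∃ m : ℝ, 0 < m ∧ ∀ s ∈ σS, m ≤ f s)
    (hsub : ∃ C : ℝ, ∀ s ∈ σS, f s / s ≤ C) :
    ∃ κ : ℝ, 0 < κ ∧ ∃ M : ℝ, 1 ≤ M ∧
      ∀ u v : ℝ → Ω → ℂ,
        (∀ᵐ ω ∂μ, ∀ t : ℝ,
          HasDerivAt (fun τ => u τ ω) (v t ω) t ∧
          HasDerivAt (fun τ => v τ ω)
            (-((a ω : ℂ) * u t ω + (f (a ω) : ℂ) * v t ω)) t) →
        memDom μ a f (u 0) (v 0) →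
        ∀ t : ℝ, 0 ≤ t →
          hsq μ a (u t) (v t) ≤
            ENNReal.ofReal (M ^ 2 * Real.exp (-(2 * κ * t))) * hsq μ a (u 0) (v 0) := by
  obtain ⟨C, ε, hε, hεC, hparams⟩ := exists_damping_params hs₀ hlb hinf hsub
  refine ⟨ε / 6, by positivity, Real.sqrt 3, Real.one_le_sqrt.2 (by norm_num),
    fun u v hode hdom t ht => ?_⟩
  rw [Real.sq_sqrt (by norm_num), show 2 * (ε / 6) * t = ε / 3 * t by ring]
  refine hsq_le_ofReal_mul_of_ae_le (by positivity)
    (hmem.mono fun ω hω => (hparams _ hω).1.le) hdom.2.1.1.aestronglyMeasurable ?_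
  filter_upwards [hode, hmem] with ω hω haω
  obtain ⟨hpos, hCa, hεa, hεc⟩ := hparams _ haω
  exact damped_energy_le hpos hCa hε hεa hεC hεc (fun s => (hω s).1)
    (fun s => by simpa only [Complex.real_smul] using (hω s).2) ht

/-- **Sufficiency for exponential stability (energy method).** In the
multiplication-operator model of the spectral theorem (`A` = multiplication by
`a`, spectrum `σS ⊂ (0,∞)` bounded away from `0`), assume
`inf_{s∈σ(A)} f(s) > 0` and `sup_{s∈σ(A)} f(s)/s < ∞`.  Then there exist
`κ > 0` and `M ≥ 1` such that every classical solution `z(t) = (u(t), u̇(t))`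
of `ü + Au + f(A)u̇ = 0` (which in this model solves the equation fiberwise
a.e.) with `z(0) ∈ D(𝒜)` satisfies
`‖z(t)‖²_ℋ ≤ M² e^{-2κt} ‖z(0)‖²_ℋ` for all `t ≥ 0`. -/
theorem exponential_stability
    (μ : Measure Ω) [SigmaFinite μ] (a : Ω → ℝ) (ha : Measurable a)
    (σS : Set ℝ) (hcl : IsClosed σS) (hne : σS.Nonempty)
    (s₀ : ℝ) (hs₀ : 0 < s₀) (hlb : ∀ s ∈ σS, s₀ ≤ s)
    (hmem : ∀ᵐ ω ∂μ, a ω ∈ σS)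
    (f : ℝ → ℝ) (hfc : ContinuousOn f σS) (hf0 : ∀ s ∈ σS, 0 ≤ f s)
    (hinf : ∃ m : ℝ, 0 < m ∧ ∀ s ∈ σS, m ≤ f s)
    (hsub : ∃ C : ℝ, ∀ s ∈ σS, f s / s ≤ C) :
    ∃ κ : ℝ, 0 < κ ∧ ∃ M : ℝ, 1 ≤ M ∧
      ∀ u v : ℝ → Ω → ℂ,
        (∀ᵐ ω ∂μ, ∀ t : ℝ,
          HasDerivAt (fun τ => u τ ω) (v t ω) t ∧
          HasDerivAt (fun τ => v τ ω)
            (-((a ω : ℂ) * u t ω + (f (a ω) : ℂ) * v t ω)) t) →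
        memDom μ a f (u 0) (v 0) →
        ∀ t : ℝ, 0 ≤ t →
          hsq μ a (u t) (v t) ≤
            ENNReal.ofReal (M ^ 2 * Real.exp (-(2 * κ * t))) * hsq μ a (u 0) (v 0) :=
  exponential_stability_general μ a σS s₀ hs₀ hlb hmem f hinf hsub
end
end

section
/- (Resolvent estimate under a polynomial damping lower bound, case α ≤ 1.) Assume inf_{s∈σ(A)} s^α f(s) > 0 for some 0 < α ≤ 1, sup_{s∈σ(A)} f(s)/s < ∞, and f(s) > 0 for all s ∈ σ(A). Then there exists c > 0 such that for every λ ∈ ℝ with |λ| ≥ 1 and every ẑ ∈ ℋ, the unique solution z ∈ D(𝒜) of iλz − 𝒜z = ẑ satisfies ‖z‖_ℋ ≤ c|λ|^{2α}‖ẑ‖_ℋ; i.e., ‖(iλ−𝒜)^{-1}‖ = O(|λ|^{2α}) as |λ| → ∞. -/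
open MeasureTheory Filter Complex

noncomputable section

variable {Ω : Type*} [MeasurableSpace Ω]

/-!
In the spectral representation the resolvent acts fibrewise. At a spectral value `s`, with
`F = f(s)` and `t = λ²`, the equation `iλz − 𝒜z = ẑ` gives `v = iλu − û` and
`(s − t + iλF) u = v̂ + (F + iλ) û`, so everything hinges on a lower bound for the symbol,
`|s − t + iλF|² = (s − t)² + tF²`. Away from the resonance `s ≈ t` the term `(s − t)²`
dominates and, because `f(s) ≲ s`, yields a bound uniform in `λ`. Near the resonance `s ≲ t`,
hence `f(s) ≳ s^{-α} ≳ |λ|^{-2α}`, and the term `tF²` costs exactly the factor `|λ|^{4α}`.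
Integrating the fibrewise bound over the spectral measure gives the estimate.
-/

section Fibre

variable {s F lam : ℝ} {u v uh vh : ℂ}

lemma sq_norm_add_mul_I (x y : ℝ) : ‖(x : ℂ) + y * I‖ ^ 2 = x ^ 2 + y ^ 2 := by
  rw [norm_add_mul_I, Real.sq_sqrt (by positivity)]

lemma symbol_mul_eq (e1 : lam * I * u - v = uh) (e2 : lam * I * v + (s * u + F * v) = vh) :
    ((s - lam ^ 2 : ℝ) + (lam * F : ℝ) * I) * u = vh + ((F : ℂ) + lam * I) * uh := by
  push_cast
  linear_combination e2 + ((F : ℂ) + lam * I) * e1 - (lam : ℂ) ^ 2 * u * I_sq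

lemma symbol_sq_mul_sq_norm_le (e1 : lam * I * u - v = uh)
    (e2 : lam * I * v + (s * u + F * v) = vh) :
    ((s - lam ^ 2) ^ 2 + lam ^ 2 * F ^ 2) * ‖u‖ ^ 2
      ≤ 2 * ‖vh‖ ^ 2 + 2 * (F ^ 2 + lam ^ 2) * ‖uh‖ ^ 2 := by
  have hle : ‖((s - lam ^ 2 : ℝ) + (lam * F : ℝ) * I)‖ * ‖u‖
      ≤ ‖vh‖ + ‖(F : ℂ) + lam * I‖ * ‖uh‖ := by
    rw [← norm_mul, symbol_mul_eq e1 e2, ← norm_mul]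
    exact norm_add_le _ _
  have hsq := pow_le_pow_left₀ (by positivity) hle 2
  rw [mul_pow, sq_norm_add_mul_I] at hsq
  have hG := sq_norm_add_mul_I F lam
  nlinarith [sq_nonneg (‖vh‖ - ‖(F : ℂ) + lam * I‖ * ‖uh‖)]

lemma sq_norm_le_of_sub_eq (e1 : lam * I * u - v = uh) :
    ‖v‖ ^ 2 ≤ 2 * lam ^ 2 * ‖u‖ ^ 2 + 2 * ‖uh‖ ^ 2 := by
  have hle : ‖v‖ ≤ |lam| * ‖u‖ + ‖uh‖ := by
    calc ‖v‖ = ‖lam * I * u - uh‖ := by rw [← e1, sub_sub_cancel]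
      _ ≤ ‖lam * I * u‖ + ‖uh‖ := norm_sub_le _ _
      _ = |lam| * ‖u‖ + ‖uh‖ := by simp
  have hsq := pow_le_pow_left₀ (norm_nonneg _) hle 2
  nlinarith [sq_nonneg (|lam| * ‖u‖ - ‖uh‖), sq_abs lam]

end Fibre

lemma weighted_sq_le {s t F B X Y XH YH : ℝ} (hs : 0 < s) (ht : 0 ≤ t)
    (hB : (s + 2 * t) * (s + t + F ^ 2) ≤ B * s * ((s - t) ^ 2 + t * F ^ 2))
    (hX : ((s - t) ^ 2 + t * F ^ 2) * X ^ 2 ≤ 2 * YH ^ 2 + 2 * (F ^ 2 + t) * XH ^ 2)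
    (hY : Y ^ 2 ≤ 2 * t * X ^ 2 + 2 * XH ^ 2) :
    s * X ^ 2 + Y ^ 2 ≤ 2 * B * (s * XH ^ 2 + YH ^ 2) + 2 * XH ^ 2 := by
  set d := (s - t) ^ 2 + t * F ^ 2
  have hBsd : 0 < B * s * d := lt_of_lt_of_le (by positivity) hB
  have hd : 0 < d := lt_of_le_of_ne (by positivity) fun h => by simp [← h] at hBsd
  have hu : (s + 2 * t) * X ^ 2 ≤ 2 * B * (s * XH ^ 2 + YH ^ 2) := by
    refine le_of_mul_le_mul_left ?_ (mul_pos hs hd)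
    calc s * d * ((s + 2 * t) * X ^ 2) = s * (s + 2 * t) * (d * X ^ 2) := by ring
      _ ≤ s * (s + 2 * t) * (2 * YH ^ 2 + 2 * (F ^ 2 + t) * XH ^ 2) := by gcongr
      _ ≤ 2 * ((s + 2 * t) * (s + t + F ^ 2)) * (s * XH ^ 2 + YH ^ 2) := by
        have hgap : 0 ≤ 2 * (s + 2 * t) * (s ^ 2 * XH ^ 2 + (t + F ^ 2) * YH ^ 2) := by positivity
        linarith [show 2 * ((s + 2 * t) * (s + t + F ^ 2)) * (s * XH ^ 2 + YH ^ 2)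
          - s * (s + 2 * t) * (2 * YH ^ 2 + 2 * (F ^ 2 + t) * XH ^ 2)
          = 2 * (s + 2 * t) * (s ^ 2 * XH ^ 2 + (t + F ^ 2) * YH ^ 2) by ring]
      _ ≤ 2 * (B * s * d) * (s * XH ^ 2 + YH ^ 2) := by gcongr
      _ = s * d * (2 * B * (s * XH ^ 2 + YH ^ 2)) := by ring
  nlinarith

lemma weight_le_of_nonresonant {s t F C s₀ : ℝ} (hs₀ : 0 < s₀) (hs : s₀ ≤ s) (ht : 0 ≤ t)
    (hF : 0 ≤ F) (hFC : F ≤ C * s) (hnr : t ≤ 2 * |s - t|) :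
    (s + 2 * t) * (s + t + F ^ 2) ≤ (21 * C ^ 2 + 35 / s₀) * s * (s - t) ^ 2 := by
  set e := |s - t|
  have hse : s ≤ 3 * e := by linarith [le_abs_self (s - t)]
  have hF2 : F ^ 2 ≤ C ^ 2 * s ^ 2 := by rw [← mul_pow]; exact pow_le_pow_left₀ hF hFC 2
  have hs1 : 1 ≤ s / s₀ := (one_le_div hs₀).2 hs
  rw [← sq_abs (s - t)]
  calc (s + 2 * t) * (s + t + F ^ 2) ≤ 7 * e * (5 * e + C ^ 2 * s ^ 2) := by
        gcongr <;> linarith [sq_nonneg F]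
    _ = 35 * e ^ 2 + 7 * C ^ 2 * s * (s * e) := by ring
    _ ≤ 35 * (s / s₀) * e ^ 2 + 7 * C ^ 2 * s * (3 * e * e) := by gcongr <;> nlinarith
    _ = (21 * C ^ 2 + 35 / s₀) * s * e ^ 2 := by ring

lemma weight_le_of_resonant {s t F κ : ℝ} (hs : 0 ≤ s) (ht : 1 ≤ t) (hr : 2 * |s - t| < t)
    (hκ : 1 ≤ κ * F ^ 2) :
    (s + 2 * t) * (s + t + F ^ 2) ≤ (15 * κ + 5) * s * (t * F ^ 2) := by
  have hst : s ≤ 2 * t := by linarith [le_abs_self (s - t)]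
  have hts : t ≤ 2 * s := by linarith [neg_abs_le (s - t)]
  calc (s + 2 * t) * (s + t + F ^ 2) ≤ 5 * s * (3 * t * (κ * F ^ 2) + t * F ^ 2) := by
        have h1 : s + t ≤ 3 * t * (κ * F ^ 2) := by nlinarith
        have h2 : F ^ 2 ≤ t * F ^ 2 := le_mul_of_one_le_left (sq_nonneg F) ht
        exact mul_le_mul (by linarith) (by linarith) (by positivity) (by positivity)
    _ = (15 * κ + 5) * s * (t * F ^ 2) := by ring

lemma damping_lower_bound {s F lam m α : ℝ} (hm0 : 0 < m) (hα : 0 ≤ α) (hs : 0 ≤ s)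
    (hst : s ≤ 2 * lam ^ 2) (hF : 0 ≤ F) (hm : m ≤ s ^ α * F) :
    1 ≤ (2 ^ α / m) ^ 2 * |lam| ^ (4 * α) * F ^ 2 := by
  have hpow : s ^ α ≤ 2 ^ α * |lam| ^ (2 * α) := by
    calc s ^ α ≤ (2 * lam ^ 2) ^ α := Real.rpow_le_rpow hs hst hα
      _ = 2 ^ α * |lam| ^ (2 * α) := by
        rw [Real.mul_rpow zero_le_two (sq_nonneg lam), ← sq_abs lam,
          ← Real.rpow_natCast_mul (abs_nonneg lam)]
        norm_num
  have hlow : 1 ≤ 2 ^ α / m * |lam| ^ (2 * α) * F := by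
    calc (1 : ℝ) ≤ 2 ^ α * |lam| ^ (2 * α) * F / m :=
          (one_le_div hm0).2 (hm.trans (mul_le_mul_of_nonneg_right hpow hF))
      _ = 2 ^ α / m * |lam| ^ (2 * α) * F := by ring
  calc (1 : ℝ) ≤ (2 ^ α / m * |lam| ^ (2 * α) * F) ^ 2 := one_le_pow₀ hlow
    _ = (2 ^ α / m) ^ 2 * |lam| ^ (4 * α) * F ^ 2 := by
      rw [show 4 * α = 2 * α * (2 : ℕ) by push_cast; ring,
        Real.rpow_mul_natCast (abs_nonneg lam)]
      ring

def weightConst (s₀ C m α : ℝ) : ℝ := 21 * C ^ 2 + 35 / s₀ + 15 * (2 ^ α / m) ^ 2 + 5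

lemma weight_le {s F lam s₀ C m α : ℝ} (hs₀ : 0 < s₀) (hs : s₀ ≤ s) (hFC : F ≤ C * s)
    (hm0 : 0 < m) (hα : 0 ≤ α) (hm : m ≤ s ^ α * F) (hlam : 1 ≤ |lam|) :
    (s + 2 * lam ^ 2) * (s + lam ^ 2 + F ^ 2)
      ≤ weightConst s₀ C m α * |lam| ^ (4 * α) * s * ((s - lam ^ 2) ^ 2 + lam ^ 2 * F ^ 2) := by
  have hspos : 0 < s := hs₀.trans_le hs
  have hF : 0 < F := pos_of_mul_pos_right (hm0.trans_le hm) (by positivity)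
  have hT : 1 ≤ |lam| ^ (4 * α) := Real.one_le_rpow hlam (by positivity)
  have ht : 1 ≤ lam ^ 2 := by nlinarith [sq_abs lam]
  have hWTs : 0 ≤ weightConst s₀ C m α * |lam| ^ (4 * α) * s := by
    unfold weightConst; positivity
  rcases le_or_gt (lam ^ 2) (2 * |s - lam ^ 2|) with hnr | hr
  · calc _ ≤ (21 * C ^ 2 + 35 / s₀) * s * (s - lam ^ 2) ^ 2 :=
          weight_le_of_nonresonant hs₀ hs (sq_nonneg lam) hF.le hFC hnr
      _ ≤ weightConst s₀ C m α * |lam| ^ (4 * α) * s * ((s - lam ^ 2) ^ 2 + lam ^ 2 * F ^ 2) := by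
        have hK : 21 * C ^ 2 + 35 / s₀ ≤ weightConst s₀ C m α * |lam| ^ (4 * α) := by
          unfold weightConst; nlinarith [sq_nonneg C, div_pos (by norm_num : (0:ℝ) < 35) hs₀]
        exact mul_le_mul (mul_le_mul_of_nonneg_right hK hspos.le)
          (le_add_of_nonneg_right (by positivity)) (sq_nonneg _) hWTs
  · have hst : s ≤ 2 * lam ^ 2 := by linarith [le_abs_self (s - lam ^ 2)]
    have hκ := damping_lower_bound hm0 hα hspos.le hst hF.le hm
    calc _ ≤ (15 * ((2 ^ α / m) ^ 2 * |lam| ^ (4 * α)) + 5) * s * (lam ^ 2 * F ^ 2) :=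
          weight_le_of_resonant hspos.le ht hr (by linarith)
      _ ≤ weightConst s₀ C m α * |lam| ^ (4 * α) * s * ((s - lam ^ 2) ^ 2 + lam ^ 2 * F ^ 2) := by
        have hK : 15 * ((2 ^ α / m) ^ 2 * |lam| ^ (4 * α)) + 5
            ≤ weightConst s₀ C m α * |lam| ^ (4 * α) := by
          unfold weightConst; nlinarith [sq_nonneg C, div_pos (by norm_num : (0:ℝ) < 35) hs₀]
        exact mul_le_mul (mul_le_mul_of_nonneg_right hK hspos.le)
          (le_add_of_nonneg_left (sq_nonneg _)) (by positivity) hWTs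

lemma fibre_resolvent_bound {s F lam s₀ C m α : ℝ} {u v uh vh : ℂ} (hs₀ : 0 < s₀)
    (hs : s₀ ≤ s) (hFC : F ≤ C * s) (hm0 : 0 < m) (hα : 0 ≤ α) (hm : m ≤ s ^ α * F)
    (hlam : 1 ≤ |lam|) (e1 : lam * I * u - v = uh) (e2 : lam * I * v + (s * u + F * v) = vh) :
    s * ‖u‖ ^ 2 + ‖v‖ ^ 2
      ≤ (2 * weightConst s₀ C m α + 2 / s₀) * |lam| ^ (4 * α) * (s * ‖uh‖ ^ 2 + ‖vh‖ ^ 2) := by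
  have hspos : 0 < s := hs₀.trans_le hs
  have hT : 1 ≤ |lam| ^ (4 * α) := Real.one_le_rpow hlam (by positivity)
  have hmain := weighted_sq_le hspos (sq_nonneg lam) (weight_le hs₀ hs hFC hm0 hα hm hlam)
    (symbol_sq_mul_sq_norm_le e1 e2) (sq_norm_le_of_sub_eq e1)
  have huh : 2 * ‖uh‖ ^ 2 ≤ 2 / s₀ * |lam| ^ (4 * α) * (s * ‖uh‖ ^ 2 + ‖vh‖ ^ 2) := by
    calc 2 * ‖uh‖ ^ 2 ≤ 2 / s₀ * (s * ‖uh‖ ^ 2) := by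
          rw [div_mul_eq_mul_div, le_div_iff₀ hs₀]; nlinarith [sq_nonneg ‖uh‖]
      _ ≤ 2 / s₀ * |lam| ^ (4 * α) * (s * ‖uh‖ ^ 2 + ‖vh‖ ^ 2) := by
        rw [mul_assoc]
        refine mul_le_mul_of_nonneg_left ?_ (by positivity)
        exact (le_add_of_nonneg_right (sq_nonneg _)).trans
          (le_mul_of_one_le_left (by positivity) hT)
  linarith

lemma hsq_le_of_ae_le {μ : Measure Ω} {a : Ω → ℝ} {u v uh vh : Ω → ℂ} {K : ℝ}
    (hvh : AEStronglyMeasurable vh μ)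
    (h : ∀ᵐ ω ∂μ, 0 ≤ a ω ∧
      a ω * ‖u ω‖ ^ 2 + ‖v ω‖ ^ 2 ≤ K * (a ω * ‖uh ω‖ ^ 2 + ‖vh ω‖ ^ 2)) :
    hsq μ a u v ≤ ENNReal.ofReal K * hsq μ a uh vh := by
  have hpt : ∀ᵐ ω ∂μ, ENNReal.ofReal (a ω * ‖u ω‖ ^ 2) + ENNReal.ofReal (‖v ω‖ ^ 2)
      ≤ ENNReal.ofReal K *
        (ENNReal.ofReal (a ω * ‖uh ω‖ ^ 2) + ENNReal.ofReal (‖vh ω‖ ^ 2)) := by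
    filter_upwards [h] with ω ⟨ha, hle⟩
    rw [← ENNReal.ofReal_add (by positivity) (by positivity),
      ← ENNReal.ofReal_add (by positivity) (by positivity),
      ← ENNReal.ofReal_mul' (by positivity)]
    exact ENNReal.ofReal_le_ofReal hle
  calc hsq μ a u v
      ≤ ∫⁻ ω, (ENNReal.ofReal (a ω * ‖u ω‖ ^ 2) + ENNReal.ofReal (‖v ω‖ ^ 2)) ∂μ :=
        le_lintegral_add _ _
    _ ≤ ∫⁻ ω, ENNReal.ofReal K *
          (ENNReal.ofReal (a ω * ‖uh ω‖ ^ 2) + ENNReal.ofReal (‖vh ω‖ ^ 2)) ∂μ :=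
        lintegral_mono_ae hpt
    _ = ENNReal.ofReal K * hsq μ a uh vh := by
      rw [lintegral_const_mul' _ _ ENNReal.ofReal_ne_top,
        lintegral_add_right' _ (hvh.norm.aemeasurable.pow_const 2).ennreal_ofReal]
      rfl

theorem resolvent_upper_bound_general
    (μ : Measure Ω) (a : Ω → ℝ)
    (σS : Set ℝ)
    (s₀ : ℝ) (hs₀ : 0 < s₀) (hlb : ∀ s ∈ σS, s₀ ≤ s)
    (hmem : ∀ᵐ ω ∂μ, a ω ∈ σS)
    (f : ℝ → ℝ)
    (α : ℝ) (hα0 : 0 < α)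
    (hlow : ∃ m : ℝ, 0 < m ∧ ∀ s ∈ σS, m ≤ s ^ α * f s)
    (hsub : ∃ C : ℝ, ∀ s ∈ σS, f s / s ≤ C) :
    ∃ c : ℝ, 0 < c ∧ ∀ lam : ℝ, 1 ≤ |lam| →
      ∀ uh vh u v : Ω → ℂ, memH1 μ a uh → MemLp vh 2 μ → memDom μ a f u v →
        (fun ω => (lam : ℂ) * Complex.I * u ω - v ω) =ᵐ[μ] uh →
        (fun ω => (lam : ℂ) * Complex.I * v ω +
          ((a ω : ℂ) * u ω + (f (a ω) : ℂ) * v ω)) =ᵐ[μ] vh →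
        hsq μ a u v ≤
          ENNReal.ofReal (c ^ 2 * |lam| ^ (4 * α)) * hsq μ a uh vh := by
  obtain ⟨m, hm0, hm⟩ := hlow
  obtain ⟨C, hC⟩ := hsub
  have hK : 0 < 2 * weightConst s₀ C m α + 2 / s₀ := by unfold weightConst; positivity
  refine ⟨√(2 * weightConst s₀ C m α + 2 / s₀), Real.sqrt_pos.2 hK,
    fun lam hlam uh vh u v _ hvh _ he1 he2 => ?_⟩
  rw [Real.sq_sqrt hK.le]
  refine hsq_le_of_ae_le hvh.aestronglyMeasurable ?_
  filter_upwards [hmem, he1, he2] with ω hω e1 e2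
  have hs := hlb _ hω
  have hspos := hs₀.trans_le hs
  exact ⟨hspos.le, fibre_resolvent_bound hs₀ hs ((div_le_iff₀ hspos).1 (hC _ hω)) hm0 hα0.le (hm _ hω)
    hlam e1 e2⟩

/-- **Resolvent estimate under a polynomial damping lower bound (case `α ≤ 1`).**
In the multiplication-operator model of the spectral theorem (`A` = multiplication
by `a`, spectrum `σS ⊂ (0,∞)` bounded away from `0`), assume
`inf_{s∈σ(A)} s^α f(s) > 0` for some `0 < α ≤ 1`, `sup_{s∈σ(A)} f(s)/s < ∞`
and `f > 0` on `σ(A)`.  Then there is `c > 0` such that for every real `λ` with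
`|λ| ≥ 1` and every `ẑ = (û, v̂) ∈ ℋ`, any solution `z = (u,v) ∈ D(𝒜)` of
`iλz - 𝒜z = ẑ` satisfies `‖z‖_ℋ ≤ c|λ|^{2α}‖ẑ‖_ℋ`; i.e.
`‖(iλ - 𝒜)⁻¹‖ = O(|λ|^{2α})`. -/
theorem resolvent_upper_bound
    (μ : Measure Ω) [SigmaFinite μ] (a : Ω → ℝ) (ha : Measurable a)
    (σS : Set ℝ) (hcl : IsClosed σS) (hne : σS.Nonempty)
    (s₀ : ℝ) (hs₀ : 0 < s₀) (hlb : ∀ s ∈ σS, s₀ ≤ s)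
    (hmem : ∀ᵐ ω ∂μ, a ω ∈ σS)
    (f : ℝ → ℝ) (hfc : ContinuousOn f σS) (hfpos : ∀ s ∈ σS, 0 < f s)
    (α : ℝ) (hα0 : 0 < α) (hα1 : α ≤ 1)
    (hlow : ∃ m : ℝ, 0 < m ∧ ∀ s ∈ σS, m ≤ s ^ α * f s)
    (hsub : ∃ C : ℝ, ∀ s ∈ σS, f s / s ≤ C) :
    ∃ c : ℝ, 0 < c ∧ ∀ lam : ℝ, 1 ≤ |lam| →
      ∀ uh vh u v : Ω → ℂ, memH1 μ a uh → MemLp vh 2 μ → memDom μ a f u v →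
        (fun ω => (lam : ℂ) * Complex.I * u ω - v ω) =ᵐ[μ] uh →
        (fun ω => (lam : ℂ) * Complex.I * v ω +
          ((a ω : ℂ) * u ω + (f (a ω) : ℂ) * v ω)) =ᵐ[μ] vh →
        hsq μ a u v ≤
          ENNReal.ofReal (c ^ 2 * |lam| ^ (4 * α)) * hsq μ a uh vh :=
  resolvent_upper_bound_general μ a σS s₀ hs₀ hlb hmem f α hα0 hlow hsub
end
end
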